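/- arXiv:2004.04726 — 5 statements merged into one kernel-verified Lean document; each statement's English description precedes it below -/
import Mathlib

section
/- If ⊲₁ is an adapted partial order to A and ⊲₂ is a refinement of ⊲₁ (i.e., ⊲₁ ⊆ ⊲₂ as relations), then the standard modules with respect to ⊲₁ and ⊲₂ coincide: Δ₁(i) ≅ Δ₂(i) for all i ∈ I. -/
/-!
STATEMENT 1.  Let `A` be an Artin algebra with a complete set `{S i}_{i ∈ I}` of pairwise
non-isomorphic simple modules, with projective covers `P i`.  If `⊲₁` is an adapted partial
order on `I` and `⊲₂` is a refinement of `⊲₁`, then the corresponding standard modules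
coincide: `Δ₁ i ≅ Δ₂ i` for all `i`.
-/

universe v u

variable (A : Type u) [Ring A]

/-- `S` is a composition factor of `M`. -/
def IsCompFactor (S M : ModuleCat.{v} A) : Prop :=
  ∃ (N N' : Submodule A M), N ≤ N' ∧
    Nonempty ((↥N' ⧸ Submodule.comap N'.subtype N) ≃ₗ[A] S)

/-- `M` has simple top isomorphic to `S`: it has a unique maximal submodule (the radical),
with simple quotient isomorphic to `S`. -/
def HasSimpleTop (S M : ModuleCat.{v} A) : Prop :=
  ∃ N : Submodule A M, IsCoatom N ∧ (∀ N' : Submodule A M, IsCoatom N' → N' = N) ∧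
    Nonempty ((↥M ⧸ N) ≃ₗ[A] S)

/-- `M` has simple socle isomorphic to `S`: it has a unique minimal submodule, isomorphic
to `S`. -/
def HasSimpleSocle (S M : ModuleCat.{v} A) : Prop :=
  ∃ N : Submodule A M, IsAtom N ∧ (∀ N' : Submodule A M, IsAtom N' → N' = N) ∧
    Nonempty (↥N ≃ₗ[A] S)

/-- The Dlab–Ringel adaptedness condition for a partial order `⊲` on the index set of the
simple modules. -/
def AdaptedMod {I : Type*} (S : I → ModuleCat.{v} A) (lhd : I → I → Prop) : Prop :=
  ∀ (M : ModuleCat.{v} A) (i j : I),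
    HasSimpleTop A (S i) M → HasSimpleSocle A (S j) M →
    ¬ lhd i j → ¬ lhd j i →
    ∃ k, lhd i k ∧ lhd j k ∧ IsCompFactor A (S k) M

/-- `D` is the standard module `Δ(i)` with respect to `⊲`: the largest quotient of `P i`
all of whose composition factors `S j` satisfy `j ⊲ i`. -/
def IsStandardModule {I : Type*} (S P : I → ModuleCat.{v} A) (lhd : I → I → Prop)
    (i : I) (D : ModuleCat.{v} A) : Prop :=
  ∃ K : Submodule A (P i),
    Nonempty ((↥(P i) ⧸ K) ≃ₗ[A] D) ∧
    (∀ j, IsCompFactor A (S j) D → lhd j i) ∧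
    ∀ N : Submodule A (P i),
      (∀ j, IsCompFactor A (S j) (ModuleCat.of A (↥(P i) ⧸ N)) → lhd j i) → K ≤ N

/-- `P` is a projective cover of `S` (projective, with a surjection onto `S` having
superfluous kernel). -/
def IsProjCover (P S : ModuleCat.{v} A) : Prop :=
  Module.Projective A P ∧
  ∃ f : P →ₗ[A] S, Function.Surjective f ∧
    ∀ N : Submodule A P, N ⊔ LinearMap.ker f = ⊤ → N = ⊤

/- ## Auxiliary lemmas -/

section AuxLemmas

variable {A}

/-- A composition factor of the target of a surjective map is a composition factor
of the source. -/
lemma isCompFactor_of_surjective' {M M' S : ModuleCat.{v} A}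
    (φ : ↥M' →ₗ[A] ↥M) (hφ : Function.Surjective φ)
    (h : IsCompFactor A S M) : IsCompFactor A S M' := by
  obtain ⟨N, N', hNN, ⟨e⟩⟩ := h
  refine ⟨N.comap φ, N'.comap φ, Submodule.comap_mono hNN, ?_⟩
  let ρ : ↥(N'.comap φ) →ₗ[A] ↥N' := φ.restrict (fun x hx => hx)
  let ψ := (Submodule.mkQ (N.comap N'.subtype)).comp ρ
  have hψsurj : Function.Surjective ψ := by
    apply Function.Surjective.comp (Submodule.mkQ_surjective _)
    rintro ⟨y, hy⟩
    obtain ⟨x, rfl⟩ := hφ y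
    exact ⟨⟨x, hy⟩, rfl⟩
  have hker : LinearMap.ker ψ
      = Submodule.comap (N'.comap φ).subtype (N.comap φ) := by
    ext x
    simp only [ψ, ρ, LinearMap.mem_ker, LinearMap.comp_apply, Submodule.mem_comap,
      Submodule.subtype_apply]
    rw [Submodule.mkQ_apply, Submodule.Quotient.mk_eq_zero]
    simp [LinearMap.restrict_apply]
  exact ⟨((Submodule.quotEquivOfEq _ _ hker.symm).trans
    (ψ.quotKerEquivOfSurjective hψsurj)).trans e⟩

end AuxLemmas

/-- `M` has a greatest proper submodule, with quotient isomorphic to `S`. -/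
def GoodTop (S M : ModuleCat.{v} A) : Prop :=
  ∃ R : Submodule A M, R ≠ ⊤ ∧ (∀ N : Submodule A M, N ≠ ⊤ → N ≤ R) ∧
    Nonempty ((↥M ⧸ R) ≃ₗ[A] S)

section GoodTopLemmas

variable {A}

lemma GoodTop.hasSimpleTop {S M : ModuleCat.{v} A} (h : GoodTop A S M) :
    HasSimpleTop A S M := by
  obtain ⟨R, hRt, hall, he⟩ := h
  refine ⟨R, ⟨hRt, fun b hb => by_contra fun hbt => hb.not_ge (hall b hbt)⟩,
    fun N' hN' => (hall N' hN'.1).lt_or_eq.elim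
      (fun hlt => absurd (hN'.2 R hlt) hRt) id, he⟩

lemma GoodTop.quotient {S M : ModuleCat.{v} A} (h : GoodTop A S M)
    {Q : Submodule A M} (hQ : Q ≠ ⊤) :
    GoodTop A S (ModuleCat.of A (↥M ⧸ Q)) := by
  obtain ⟨R, hRt, hall, ⟨e⟩⟩ := h
  have hQR : Q ≤ R := hall Q hQ
  refine ⟨R.map Q.mkQ, ?_, ?_, ?_⟩
  · intro hc
    have h2 := congrArg (Submodule.comap Q.mkQ) hc
    rw [Submodule.comap_map_eq, Submodule.ker_mkQ, sup_eq_left.mpr hQR,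
      Submodule.comap_top] at h2
    exact hRt h2
  · intro N hN
    have h1 : Submodule.comap Q.mkQ N ≠ ⊤ := by
      intro hc
      apply hN
      rw [← Submodule.map_comap_eq_of_surjective Q.mkQ_surjective N, hc,
        Submodule.map_top, Submodule.range_mkQ]
    calc N = (N.comap Q.mkQ).map Q.mkQ :=
          (Submodule.map_comap_eq_of_surjective Q.mkQ_surjective N).symm
      _ ≤ R.map Q.mkQ := Submodule.map_mono (hall _ h1)
  · exact ⟨(Submodule.quotientQuotientEquivQuotient Q R hQR).trans e⟩

end GoodTopLemmas

/-- a refinement of an adapted order has the same standard modules. -/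
theorem standardModules_eq_of_refinement
    {A : Type u} [Ring A] [IsArtinianRing A] {I : Type*} [Finite I]
    (S : I → ModuleCat.{v} A)
    (hsimple : ∀ i, IsSimpleModule A (S i))
    (hnoniso : ∀ i j, Nonempty ((S i : Type v) ≃ₗ[A] S j) → i = j)
    (hcomplete : ∀ M : ModuleCat.{v} A, IsSimpleModule A M → ∃ i, Nonempty ((M : Type v) ≃ₗ[A] S i))
    (P : I → ModuleCat.{v} A) (hP : ∀ i, IsProjCover A (P i) (S i))
    (lhd₁ lhd₂ : I → I → Prop)
    (hpo₁ : IsPartialOrder I lhd₁) (hpo₂ : IsPartialOrder I lhd₂)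
    (hadapted : AdaptedMod A S lhd₁)
    (hrefine : ∀ i j, lhd₁ i j → lhd₂ i j)
    (Δ₁ Δ₂ : I → ModuleCat.{v} A)
    (h₁ : ∀ i, IsStandardModule A S P lhd₁ i (Δ₁ i))
    (h₂ : ∀ i, IsStandardModule A S P lhd₂ i (Δ₂ i)) :
    ∀ i, Nonempty ((Δ₁ i : Type v) ≃ₗ[A] Δ₂ i) := by
  intro i
  haveI := hsimple i
  haveI : Nontrivial (S i) := IsSimpleModule.nontrivial A (S i)
  obtain ⟨hPproj, f, hfsurj, hfsmall⟩ := hP i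
  -- every proper submodule of `P i` is contained in `ker f`
  have hprop : ∀ N : Submodule A (P i), N ≠ ⊤ → N ≤ LinearMap.ker f := by
    intro N hN
    by_contra hnle
    have h1 : Submodule.map f N ≠ ⊥ := by
      intro hb
      apply hnle
      intro x hx
      have hfx : f x ∈ Submodule.map f N := Submodule.mem_map_of_mem hx
      rw [hb, Submodule.mem_bot] at hfx
      exact LinearMap.mem_ker.mpr hfx
    rcases eq_bot_or_eq_top (Submodule.map f N) with hb | ht
    · exact h1 hb
    · apply hN
      apply hfsmall
      have h2 := congrArg (Submodule.comap f) ht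
      rwa [Submodule.comap_map_eq, Submodule.comap_top] at h2
  have hker_ne_top : LinearMap.ker f ≠ ⊤ := by
    intro hc
    obtain ⟨y, hy⟩ := exists_ne (0 : S i)
    obtain ⟨x, rfl⟩ := hfsurj y
    exact hy (LinearMap.mem_ker.mp (hc ▸ Submodule.mem_top))
  have gtP : GoodTop A (S i) (P i) :=
    ⟨LinearMap.ker f, hker_ne_top, hprop, ⟨f.quotKerEquivOfSurjective hfsurj⟩⟩
  obtain ⟨K₁, ⟨e₁⟩, hΔ₁, hmin₁⟩ := h₁ i
  obtain ⟨K₂, ⟨e₂⟩, hΔ₂, hmin₂⟩ := h₂ i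
  -- factors of quotients of `P i` transfer
  have hfact2 : ∀ k, IsCompFactor A (S k) (ModuleCat.of A (↥(P i) ⧸ K₂)) → lhd₂ k i := by
    intro k hk
    exact hΔ₂ k (isCompFactor_of_surjective'
      (M := ModuleCat.of A (↥(P i) ⧸ K₂)) (M' := Δ₂ i)
      e₂.symm.toLinearMap e₂.symm.surjective hk)
  -- `K₂` is contained in `ker f`
  have hsimpleQ : ∀ j, IsCompFactor A (S j)
      (ModuleCat.of A (↥(P i) ⧸ LinearMap.ker f)) → j = i := by
    intro j hj
    haveI := hsimple j
    haveI : Nontrivial (S j) := IsSimpleModule.nontrivial A (S j)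
    have hj' : IsCompFactor A (S j) (S i) := isCompFactor_of_surjective'
      (M := ModuleCat.of A (↥(P i) ⧸ LinearMap.ker f)) (M' := S i)
      (f.quotKerEquivOfSurjective hfsurj).symm.toLinearMap
      (f.quotKerEquivOfSurjective hfsurj).symm.surjective hj
    obtain ⟨N, N', hNN, ⟨ej⟩⟩ := hj'
    rcases eq_bot_or_eq_top N' with rfl | rfl
    · obtain rfl : N = ⊥ := le_bot_iff.mp hNN
      have hc : Submodule.comap (⊥ : Submodule A ↥(S i)).subtype
          (⊥ : Submodule A ↥(S i)) = ⊤ := eq_top_iff.mpr (fun x _ => x.2)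
      haveI := Submodule.Quotient.subsingleton_iff.mpr hc
      exact absurd ((Equiv.subsingleton_congr ej.toEquiv).mp inferInstance)
        (not_subsingleton (S j))
    · rcases eq_bot_or_eq_top N with rfl | rfl
      · have hbot : Submodule.comap (⊤ : Submodule A ↥(S i)).subtype
            (⊥ : Submodule A ↥(S i)) = ⊥ := by
          rw [Submodule.comap_bot, Submodule.ker_subtype]
        exact hnoniso j i
          ⟨ej.symm.trans ((Submodule.quotEquivOfEqBot _ hbot).trans Submodule.topEquiv)⟩
      · have hcomap : Submodule.comap (⊤ : Submodule A ↥(S i)).subtype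
            (⊤ : Submodule A ↥(S i)) = ⊤ := Submodule.comap_top _
        haveI := Submodule.Quotient.subsingleton_iff.mpr hcomap
        exact absurd ((Equiv.subsingleton_congr ej.toEquiv).mp inferInstance)
          (not_subsingleton (S j))
  have hK₂ker : K₂ ≤ LinearMap.ker f := by
    apply hmin₂
    intro j hj
    rw [hsimpleQ j hj]
    exact hpo₂.refl i
  have hK₂ne : K₂ ≠ ⊤ := fun hc => hker_ne_top (top_le_iff.mp (hc ▸ hK₂ker))
  -- direction 1 : K₂ ≤ K₁
  have hK₂K₁ : K₂ ≤ K₁ := by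
    apply hmin₂
    intro j hj
    exact hrefine j i (hΔ₁ j (isCompFactor_of_surjective'
      (M := ModuleCat.of A (↥(P i) ⧸ K₁)) (M' := Δ₁ i)
      e₁.symm.toLinearMap e₁.symm.surjective hj))
  -- direction 2 : all composition factors of `P i ⧸ K₂` already satisfy `lhd₁`
  have claim : ∀ j, IsCompFactor A (S j) (ModuleCat.of A (↥(P i) ⧸ K₂)) → lhd₁ j i := by
    intro j hcf
    by_contra hbad
    haveI := hsimple j
    haveI : Nontrivial (S j) := IsSimpleModule.nontrivial A (S j)
    have hjlt2 : lhd₂ j i := hfact2 j hcf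
    have hnot1ij : ¬ lhd₁ i j := by
      intro h
      obtain rfl := hpo₂.antisymm i j (hrefine i j h) hjlt2
      exact hbad (hpo₁.refl i)
    obtain ⟨N, N', hNN', ⟨ej⟩⟩ := hcf
    have hcomapne : Submodule.comap N'.subtype N ≠ ⊤ := by
      intro hc
      haveI := Submodule.Quotient.subsingleton_iff.mpr hc
      exact absurd ((Equiv.subsingleton_congr ej.toEquiv).mp inferInstance)
        (not_subsingleton (S j))
    have hNne : N ≠ ⊤ := by
      rintro rfl
      exact hcomapne (Submodule.comap_top _)
    have gtV : GoodTop A (S i) (ModuleCat.of A (↥(P i) ⧸ K₂)) := gtP.quotient hK₂ne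
    set M' := ModuleCat.of A ((↥(P i) ⧸ K₂) ⧸ N) with hM'def
    have gtM' : GoodTop A (S i) M' := gtV.quotient hNne
    -- the image `T` of `N'` in `M'` is isomorphic to `S j`
    let φT : ↥N' →ₗ[A] ↥M' := (N.mkQ).comp N'.subtype
    have hkerT : LinearMap.ker φT = Submodule.comap N'.subtype N := by
      rw [LinearMap.ker_comp, Submodule.ker_mkQ]
    set T := LinearMap.range φT with hTdef
    have eT : ↥T ≃ₗ[A] ↥(S j) :=
      (φT.quotKerEquivRange).symm.trans ((Submodule.quotEquivOfEq _ _ hkerT).trans ej)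
    have hTsimple : IsSimpleModule A ↥T := IsSimpleModule.congr eT
    have hTatom : IsAtom T := isSimpleModule_iff_isAtom.mp hTsimple
    -- a maximal submodule `C` of `M'` intersecting `T` trivially
    have hzorn : ∃ C, Maximal (· ∈ {C : Submodule A ↥M' | C ⊓ T = ⊥}) C := by
      apply zorn_le₀
      intro c hcs hchain
      rcases c.eq_empty_or_nonempty with rfl | hne
      · exact ⟨⊥, by simp, fun z hz => absurd hz (Set.notMem_empty z)⟩
      · refine ⟨sSup c, ?_, fun z hz => le_sSup hz⟩
        rw [Set.mem_setOf_eq, eq_bot_iff]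
        intro x hx
        obtain ⟨hx1, hx2⟩ := Submodule.mem_inf.mp hx
        obtain ⟨D, hDc, hxD⟩ := (Submodule.mem_sSup_of_directed hne hchain.directedOn).mp hx1
        have hmem : x ∈ D ⊓ T := Submodule.mem_inf.mpr ⟨hxD, hx2⟩
        rwa [show D ⊓ T = ⊥ from hcs hDc] at hmem
    obtain ⟨C, hC⟩ := hzorn
    have hCT : C ⊓ T = ⊥ := hC.1
    have hCne : C ≠ ⊤ := by
      intro hc
      apply hTatom.1
      rw [← hCT, hc, top_inf_eq]
    have hmax' : ∀ D : Submodule A ↥M', C < D → T ≤ D := by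
      intro D hD
      have hDT : D ⊓ T ≠ ⊥ := fun h => hD.ne' (le_antisymm (hC.2 h hD.le) hD.le)
      rcases (inf_le_right : D ⊓ T ≤ T).lt_or_eq with h | h
      · exact absurd (hTatom.2 _ h) hDT
      · rw [← h]; exact inf_le_left
    -- the image of `T` in `M' ⧸ C` is a simple socle
    let φ' : ↥T →ₗ[A] (↥M' ⧸ C) := (C.mkQ).comp T.subtype
    have hker' : LinearMap.ker φ' = ⊥ := by
      rw [LinearMap.ker_comp, Submodule.ker_mkQ, eq_bot_iff]
      rintro ⟨x, hxT⟩ hx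
      have hxC : x ∈ C := hx
      have hx0 : x ∈ (⊥ : Submodule A ↥M') := hCT ▸ Submodule.mem_inf.mpr ⟨hxC, hxT⟩
      have : x = 0 := (Submodule.mem_bot A).mp hx0
      simp [Submodule.mem_bot, Subtype.ext_iff, this]
    have hrange' : LinearMap.range φ' = T.map C.mkQ := by
      rw [LinearMap.range_comp, Submodule.range_subtype]
    have eT' : ↥(T.map C.mkQ) ≃ₗ[A] ↥(S j) :=
      ((LinearEquiv.ofEq _ _ hrange'.symm).trans (φ'.quotKerEquivRange).symm).trans
        ((Submodule.quotEquivOfEqBot _ hker').trans eT)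
    have hT'simple : IsSimpleModule A ↥(T.map C.mkQ) := IsSimpleModule.congr eT'
    have hT'atom : IsAtom (T.map C.mkQ) := isSimpleModule_iff_isAtom.mp hT'simple
    have hess : ∀ D : Submodule A (↥M' ⧸ C), D ≠ ⊥ → T.map C.mkQ ≤ D := by
      intro D hD
      have hlt : C < Submodule.comap C.mkQ D := by
        refine lt_of_le_of_ne ?_ ?_
        · intro x hx
          have h0 : C.mkQ x = 0 := by
            rw [Submodule.mkQ_apply, Submodule.Quotient.mk_eq_zero]; exact hx
          have : C.mkQ x ∈ D := h0 ▸ D.zero_mem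
          exact this
        · intro hc
          apply hD
          rw [← Submodule.map_comap_eq_of_surjective C.mkQ_surjective D, ← hc, eq_bot_iff]
          intro x hx
          obtain ⟨y, hy, rfl⟩ := hx
          have h0 : C.mkQ y = 0 := by
            rw [Submodule.mkQ_apply, Submodule.Quotient.mk_eq_zero]; exact hy
          rw [h0]
          exact Submodule.zero_mem ⊥
      calc T.map C.mkQ ≤ (Submodule.comap C.mkQ D).map C.mkQ :=
            Submodule.map_mono (hmax' _ hlt)
        _ = D := Submodule.map_comap_eq_of_surjective C.mkQ_surjective D
    have hsocle : HasSimpleSocle A (S j) (ModuleCat.of A (↥M' ⧸ C)) :=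
      ⟨T.map C.mkQ, hT'atom,
        fun D hD => (hess D hD.1).lt_or_eq.elim
          (fun h => absurd (hD.2 _ h) hT'atom.1) (fun h => h.symm), ⟨eT'⟩⟩
    have htop : HasSimpleTop A (S i) (ModuleCat.of A (↥M' ⧸ C)) :=
      (gtM'.quotient hCne).hasSimpleTop
    obtain ⟨k, hik, hjk, hkfact⟩ :=
      hadapted (ModuleCat.of A (↥M' ⧸ C)) i j htop hsocle hnot1ij hbad
    have hk1 : IsCompFactor A (S k) M' := isCompFactor_of_surjective'
      (M := ModuleCat.of A (↥M' ⧸ C)) (M' := M') C.mkQ C.mkQ_surjective hkfact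
    have hk2 : IsCompFactor A (S k) (ModuleCat.of A (↥(P i) ⧸ K₂)) :=
      isCompFactor_of_surjective' (M := M') (M' := ModuleCat.of A (↥(P i) ⧸ K₂))
        N.mkQ N.mkQ_surjective hk1
    obtain rfl := hpo₂.antisymm i k (hrefine i k hik) (hfact2 k hk2)
    exact hbad hjk
  have hKeq : K₁ = K₂ := le_antisymm (hmin₁ K₂ claim) hK₂K₁
  exact ⟨e₁.symm.trans ((Submodule.quotEquivOfEq _ _ hKeq).trans e₂)⟩
end

section
/- A partial order ⊲ on {1,…,n} arises from a binary search tree (i.e., ⊲ = ⊲_T for some binary tree T with i ⊲_T j iff i lies in the subtree rooted at j) if and only if: (1) for all i < j incomparable under ⊲ there exists k with i < k < j, i ⊲ k and j ⊲ k; and (2) for all i < j < k, i ⊲ k implies j ⊲ k, and k ⊲ i implies j ⊲ i. -/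
/-!
STATEMENT 3.  Binary trees, labeled by in-order traversal (0-based on `Fin n`), give partial
orders `⊲_T` (`i ⊲_T j` iff `i` lies in the subtree rooted at `j`, including `i = j`).
A partial order on `Fin n` arises this way iff it satisfies the two listed conditions.
-/

/-- Binary trees: either empty, or a root with a left and a right subtree. -/
inductive BTree : Type
  | nil : BTree
  | node : BTree → BTree → BTree

/-- Number of vertices of a binary tree. -/
def BTree.size : BTree → ℕ
  | .nil => 0
  | .node l r => l.size + 1 + r.size

/-- The relation `⊲_T` on the in-order (0-based) labels `0, …, size T - 1`:
`T.rel i j` iff vertex `i` lies in the subtree rooted at vertex `j` (including `i = j`). -/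
def BTree.rel : BTree → ℕ → ℕ → Prop
  | .nil, _, _ => False
  | .node l r, i, j =>
      (j = l.size ∧ i < l.size + 1 + r.size) ∨
      l.rel i j ∨
      (l.size < i ∧ l.size < j ∧ r.rel (i - (l.size + 1)) (j - (l.size + 1)))

lemma BTree.rel_bound : ∀ (T : BTree) (i j : ℕ), T.rel i j → i < T.size ∧ j < T.size := by
  intro T
  induction T with
  | nil => intro i j h; exact h.elim
  | node l r ihl ihr =>
    intro i j h
    simp only [BTree.size]
    rcases h with ⟨rfl, hi⟩ | h | ⟨hi, hj, h⟩
    · omega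
    · have := ihl _ _ h; omega
    · have := ihr _ _ h; omega

lemma BTree.rel_down : ∀ (T : BTree) (i j k : ℕ), i < j → j < k → T.rel i k → T.rel j k := by
  intro T
  induction T with
  | nil => intro _ _ _ _ _ h; exact h.elim
  | node l r ihl ihr =>
    intro i j k hij hjk h
    rcases h with ⟨rfl, hi⟩ | h | ⟨hi, hk, h⟩
    · exact Or.inl ⟨rfl, by omega⟩
    · exact Or.inr (Or.inl (ihl _ _ _ hij hjk h))
    · exact Or.inr (Or.inr ⟨by omega, hk, ihr _ _ _ (by omega) (by omega) h⟩)

lemma BTree.rel_down' : ∀ (T : BTree) (i j k : ℕ), i < j → j < k → T.rel k i → T.rel j i := by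
  intro T
  induction T with
  | nil => intro _ _ _ _ _ h; exact h.elim
  | node l r ihl ihr =>
    intro i j k hij hjk h
    rcases h with ⟨rfl, hk⟩ | h | ⟨hk, hi, h⟩
    · exact Or.inl ⟨rfl, by omega⟩
    · have := l.rel_bound _ _ h
      exact Or.inr (Or.inl (ihl _ _ _ hij hjk h))
    · exact Or.inr (Or.inr ⟨by omega, hi, ihr _ _ _ (by omega) (by omega) h⟩)

lemma BTree.rel_join : ∀ (T : BTree) (i j : ℕ), i < j → j < T.size → ¬ T.rel i j → ¬ T.rel j i →
    ∃ k, i < k ∧ k < j ∧ T.rel i k ∧ T.rel j k := by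
  intro T
  induction T with
  | nil => intro i j _ h; simp [BTree.size] at h
  | node l r ihl ihr =>
    intro i j hij hj hnij hnji
    simp only [BTree.size] at hj
    rcases Nat.lt_trichotomy j l.size with hjL | hjL | hjL
    · have h1 : ¬ l.rel i j := fun h => hnij (Or.inr (Or.inl h))
      have h2 : ¬ l.rel j i := fun h => hnji (Or.inr (Or.inl h))
      obtain ⟨k, h3, h4, h5, h6⟩ := ihl i j hij hjL h1 h2
      exact ⟨k, h3, h4, Or.inr (Or.inl h5), Or.inr (Or.inl h6)⟩
    · exact absurd (Or.inl ⟨hjL, by omega⟩) hnij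
    · rcases Nat.lt_trichotomy i l.size with hiL | hiL | hiL
      · exact ⟨l.size, hiL, hjL, Or.inl ⟨rfl, by omega⟩, Or.inl ⟨rfl, by omega⟩⟩
      · exact absurd (Or.inl ⟨hiL, by omega⟩) hnji
      · have h1 : ¬ r.rel (i - (l.size + 1)) (j - (l.size + 1)) :=
          fun h => hnij (Or.inr (Or.inr ⟨hiL, hjL, h⟩))
        have h2 : ¬ r.rel (j - (l.size + 1)) (i - (l.size + 1)) :=
          fun h => hnji (Or.inr (Or.inr ⟨hjL, hiL, h⟩))
        obtain ⟨k, h3, h4, h5, h6⟩ := ihr _ _ (by omega) (by omega) h1 h2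
        refine ⟨k + (l.size + 1), by omega, by omega,
          Or.inr (Or.inr ⟨by omega, by omega, ?_⟩),
          Or.inr (Or.inr ⟨by omega, by omega, ?_⟩)⟩
        · rw [Nat.add_sub_cancel]; exact h5
        · rw [Nat.add_sub_cancel]; exact h6

lemma exists_max {n : ℕ} (lhd : Fin n → Fin n → Prop) (hpo : IsPartialOrder (Fin n) lhd)
    (s : Finset (Fin n)) (hs : s.Nonempty) :
    ∃ m ∈ s, ∀ x ∈ s, lhd m x → m = x := by
  classical
  induction s using Finset.induction with
  | empty => simp at hs
  | @insert a s ha ih =>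
    rcases s.eq_empty_or_nonempty with rfl | hne
    · refine ⟨a, Finset.mem_insert_self _ _, ?_⟩
      intro x hx h
      simp only [Finset.notMem_empty, Finset.mem_insert, or_false] at hx
      subst hx; rfl
    · obtain ⟨m, hm, hmax⟩ := ih hne
      by_cases hma : lhd m a
      · refine ⟨a, Finset.mem_insert_self _ _, ?_⟩
        intro x hx hax
        rcases Finset.mem_insert.mp hx with rfl | hx
        · rfl
        · have hmx := hmax x hx (hpo.trans m a x hma hax)
          exact hpo.antisymm a x hax (hmx ▸ hma)
      · refine ⟨m, Finset.mem_insert_of_mem hm, ?_⟩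
        intro x hx hmx
        rcases Finset.mem_insert.mp hx with rfl | hx
        · exact absurd hmx hma
        · exact hmax x hx hmx

lemma build : ∀ (n : ℕ) (lhd : Fin n → Fin n → Prop), IsPartialOrder (Fin n) lhd →
    (∀ i j : Fin n, i < j → ¬ lhd i j → ¬ lhd j i →
        ∃ k : Fin n, i < k ∧ k < j ∧ lhd i k ∧ lhd j k) →
    (∀ i j k : Fin n, i < j → j < k → (lhd i k → lhd j k) ∧ (lhd k i → lhd j i)) →
    ∃ T : BTree, T.size = n ∧ ∀ i j : Fin n, lhd i j ↔ T.rel i.val j.val := by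
  intro n
  induction n using Nat.strong_induction_on with
  | _ n ih =>
  intro lhd hpo c1 c2
  rcases Nat.eq_zero_or_pos n with rfl | hn
  · exact ⟨.nil, rfl, fun i => i.elim0⟩
  obtain ⟨m, -, hmax⟩ := exists_max lhd hpo Finset.univ ⟨⟨0, hn⟩, Finset.mem_univ _⟩
  have hmax' : ∀ x, lhd m x → m = x := fun x => hmax x (Finset.mem_univ x)
  -- m is the root: everything is below m
  have hroot : ∀ i, lhd i m := by
    intro i
    by_cases h1 : lhd i m
    · exact h1
    by_cases h2 : lhd m i
    · exact (hmax' i h2) ▸ hpo.refl m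
    rcases lt_trichotomy i m with hlt | heq | hlt
    · obtain ⟨k, hk1, hk2, hk3, hk4⟩ := c1 i m hlt h1 h2
      exact absurd (hmax' k hk4) (by intro h; subst h; exact absurd hk2 (lt_irrefl _))
    · subst heq; exact hpo.refl i
    · obtain ⟨k, hk1, hk2, hk3, hk4⟩ := c1 m i hlt h2 h1
      exact absurd (hmax' k hk3) (by intro h; subst h; exact absurd hk1 (lt_irrefl _))
  have hmneq : ∀ j : Fin n, j ≠ m → ¬ lhd m j := by
    intro j hne h
    exact hne (hpo.antisymm m j h (hroot j)).symm
  -- cross lemma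
  have hcross : ∀ i j : Fin n, i.val < m.val → m.val < j.val → ¬ lhd i j ∧ ¬ lhd j i := by
    intro i j hi hj
    constructor
    · intro h
      have h2 : lhd m j := (c2 i m j (Fin.lt_def.mpr hi) (Fin.lt_def.mpr hj)).1 h
      have := hpo.antisymm m j h2 (hroot j)
      subst this
      exact absurd hj (lt_irrefl _)
    · intro h
      have h2 : lhd m i := (c2 i m j (Fin.lt_def.mpr hi) (Fin.lt_def.mpr hj)).2 h
      have := hpo.antisymm m i h2 (hroot i)
      subst this
      exact absurd hi (lt_irrefl _)
  -- embeddings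
  have hmn : m.val < n := m.isLt
  set n1 := m.val with hn1
  set n2 := n - m.val - 1 with hn2
  let e1 : Fin n1 → Fin n := fun i => ⟨i.val, by omega⟩
  let e2 : Fin n2 → Fin n := fun i => ⟨m.val + 1 + i.val, by omega⟩
  let lhd1 : Fin n1 → Fin n1 → Prop := fun i j => lhd (e1 i) (e1 j)
  let lhd2 : Fin n2 → Fin n2 → Prop := fun i j => lhd (e2 i) (e2 j)
  have hpo1 : IsPartialOrder (Fin n1) lhd1 :=
    { refl := fun a => hpo.refl _
      trans := fun a b c h1 h2 => hpo.trans _ _ _ h1 h2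
      antisymm := fun a b h1 h2 => by
        have := hpo.antisymm _ _ h1 h2
        have h3 : (e1 a).val = (e1 b).val := congrArg Fin.val this
        exact Fin.ext h3 }
  have hpo2 : IsPartialOrder (Fin n2) lhd2 :=
    { refl := fun a => hpo.refl _
      trans := fun a b c h1 h2 => hpo.trans _ _ _ h1 h2
      antisymm := fun a b h1 h2 => by
        have := hpo.antisymm _ _ h1 h2
        have h3 := congrArg Fin.val this
        simp only [e2] at h3
        exact Fin.ext (by omega) }
  have c11 : ∀ i j : Fin n1, i < j → ¬ lhd1 i j → ¬ lhd1 j i →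
      ∃ k : Fin n1, i < k ∧ k < j ∧ lhd1 i k ∧ lhd1 j k := by
    intro i j hij h1 h2
    obtain ⟨k, hk1, hk2, hk3, hk4⟩ := c1 (e1 i) (e1 j) (Fin.lt_def.mpr (Fin.lt_def.mp hij)) h1 h2
    have hkv : k.val < n1 := lt_trans (Fin.lt_def.mp hk2) j.isLt
    refine ⟨⟨k.val, hkv⟩, Fin.lt_def.mpr (Fin.lt_def.mp hk1), Fin.lt_def.mpr (Fin.lt_def.mp hk2), ?_, ?_⟩
    · have : e1 ⟨k.val, hkv⟩ = k := Fin.ext rfl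
      simpa only [lhd1, this] using hk3
    · have : e1 ⟨k.val, hkv⟩ = k := Fin.ext rfl
      simpa only [lhd1, this] using hk4
  have c21 : ∀ i j k : Fin n1, i < j → j < k → (lhd1 i k → lhd1 j k) ∧ (lhd1 k i → lhd1 j i) :=
    fun i j k hij hjk =>
      c2 (e1 i) (e1 j) (e1 k) (Fin.lt_def.mpr (Fin.lt_def.mp hij)) (Fin.lt_def.mpr (Fin.lt_def.mp hjk))
  have c12 : ∀ i j : Fin n2, i < j → ¬ lhd2 i j → ¬ lhd2 j i →
      ∃ k : Fin n2, i < k ∧ k < j ∧ lhd2 i k ∧ lhd2 j k := by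
    intro i j hij h1 h2
    have he : (e2 i).val < (e2 j).val := by
      simp only [e2]; have := Fin.lt_def.mp hij; omega
    obtain ⟨k, hk1, hk2, hk3, hk4⟩ := c1 (e2 i) (e2 j) (Fin.lt_def.mpr he) h1 h2
    have hk1' := Fin.lt_def.mp hk1
    have hk2' := Fin.lt_def.mp hk2
    simp only [e2] at hk1' hk2'
    have hkv : k.val - (m.val + 1) < n2 := by have := j.isLt; omega
    have hek : e2 ⟨k.val - (m.val + 1), hkv⟩ = k := Fin.ext (by simp only [e2]; omega)
    refine ⟨⟨k.val - (m.val + 1), hkv⟩, Fin.lt_def.mpr (by simp only; omega),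
      Fin.lt_def.mpr (by simp only; omega), ?_, ?_⟩
    · simpa only [lhd2, hek] using hk3
    · simpa only [lhd2, hek] using hk4
  have c22 : ∀ i j k : Fin n2, i < j → j < k → (lhd2 i k → lhd2 j k) ∧ (lhd2 k i → lhd2 j i) := by
    intro i j k hij hjk
    refine c2 (e2 i) (e2 j) (e2 k) (Fin.lt_def.mpr ?_) (Fin.lt_def.mpr ?_)
    · simp only [e2]; have := Fin.lt_def.mp hij; omega
    · simp only [e2]; have := Fin.lt_def.mp hjk; omega
  obtain ⟨l, hls, hl⟩ := ih n1 (by omega) lhd1 hpo1 c11 c21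
  obtain ⟨r, hrs, hr⟩ := ih n2 (by omega) lhd2 hpo2 c12 c22
  refine ⟨.node l r, by simp only [BTree.size, hls, hrs]; omega, ?_⟩
  intro i j
  show lhd i j ↔ ((j.val = l.size ∧ i.val < l.size + 1 + r.size) ∨
      l.rel i.val j.val ∨
      (l.size < i.val ∧ l.size < j.val ∧
        r.rel (i.val - (l.size + 1)) (j.val - (l.size + 1))))
  rw [hls, hrs]
  rcases Nat.lt_trichotomy j.val m.val with hj | hj | hj
  · rcases Nat.lt_trichotomy i.val m.val with hi | hi | hi
    · -- both left
      have key := hl ⟨i.val, hi⟩ ⟨j.val, hj⟩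
      have he1 : e1 ⟨i.val, hi⟩ = i := Fin.ext rfl
      have he2 : e1 ⟨j.val, hj⟩ = j := Fin.ext rfl
      simp only [lhd1, he1, he2] at key
      constructor
      · intro h; exact Or.inr (Or.inl (key.mp h))
      · rintro (⟨h1, -⟩ | h | ⟨h1, -, -⟩)
        · omega
        · exact key.mpr h
        · omega
    · -- i = m, j < m : both sides false
      have hI : i = m := Fin.ext hi
      constructor
      · intro h
        exact absurd h (hI ▸ hmneq j (fun h' => by subst h'; omega))
      · rintro (⟨h1, -⟩ | h | ⟨h1, -, -⟩)
        · omega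
        · have := l.rel_bound _ _ h; omega
        · omega
    · -- j < m < i : both sides false
      have := hcross j i hj hi
      constructor
      · intro h; exact absurd h this.2
      · rintro (⟨h1, -⟩ | h | ⟨-, h2, -⟩)
        · omega
        · have := l.rel_bound _ _ h; omega
        · omega
  · -- j = m : both sides true
    have hJ : j = m := Fin.ext hj
    constructor
    · intro _; exact Or.inl ⟨hj, by have := i.isLt; omega⟩
    · intro _; exact hJ ▸ hroot i
  · rcases Nat.lt_trichotomy i.val m.val with hi | hi | hi
    · -- i < m < j : both sides false
      have := hcross i j hi hj
      constructor
      · intro h; exact absurd h this.1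
      · rintro (⟨h1, -⟩ | h | ⟨h1, -, -⟩)
        · omega
        · have := l.rel_bound _ _ h; omega
        · omega
    · -- i = m, m < j : both sides false
      have hI : i = m := Fin.ext hi
      constructor
      · intro h
        exact absurd h (hI ▸ hmneq j (fun h' => by subst h'; omega))
      · rintro (⟨h1, -⟩ | h | ⟨h1, -, -⟩)
        · omega
        · have := l.rel_bound _ _ h; omega
        · omega
    · -- both right
      have hiv : i.val - (m.val + 1) < n2 := by have := i.isLt; omega
      have hjv : j.val - (m.val + 1) < n2 := by have := j.isLt; omega
      have key := hr ⟨i.val - (m.val + 1), hiv⟩ ⟨j.val - (m.val + 1), hjv⟩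
      have he1 : e2 ⟨i.val - (m.val + 1), hiv⟩ = i := Fin.ext (by simp only [e2]; omega)
      have he2 : e2 ⟨j.val - (m.val + 1), hjv⟩ = j := Fin.ext (by simp only [e2]; omega)
      simp only [lhd2, he1, he2] at key
      constructor
      · intro h; exact Or.inr (Or.inr ⟨hi, hj, key.mp h⟩)
      · rintro (⟨h1, -⟩ | h | ⟨-, -, h3⟩)
        · omega
        · have := l.rel_bound _ _ h; omega
        · exact key.mpr h3

/-- characterization of binary-search-tree orders. -/
theorem btree_order_characterization (n : ℕ) (lhd : Fin n → Fin n → Prop)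
    (hpo : IsPartialOrder (Fin n) lhd) :
    (∃ T : BTree, T.size = n ∧ ∀ i j : Fin n, lhd i j ↔ T.rel i.val j.val) ↔
      ((∀ i j : Fin n, i < j → ¬ lhd i j → ¬ lhd j i →
          ∃ k : Fin n, i < k ∧ k < j ∧ lhd i k ∧ lhd j k) ∧
       (∀ i j k : Fin n, i < j → j < k →
          (lhd i k → lhd j k) ∧ (lhd k i → lhd j i))) := by
  constructor
  · rintro ⟨T, hT, hrel⟩
    constructor
    · intro i j hij h1 h2
      have hj : j.val < T.size := hT ▸ j.isLt
      obtain ⟨k, hk1, hk2, hk3, hk4⟩ := T.rel_join i.val j.val (Fin.lt_def.mp hij) hj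
        (fun h => h1 ((hrel i j).mpr h)) (fun h => h2 ((hrel j i).mpr h))
      have hkn : k < n := lt_trans hk2 j.isLt
      exact ⟨⟨k, hkn⟩, Fin.lt_def.mpr hk1, Fin.lt_def.mpr hk2,
        (hrel i ⟨k, hkn⟩).mpr hk3, (hrel j ⟨k, hkn⟩).mpr hk4⟩
    · intro i j k hij hjk
      exact ⟨fun h => (hrel j k).mpr
          (T.rel_down i.val j.val k.val (Fin.lt_def.mp hij) (Fin.lt_def.mp hjk) ((hrel i k).mp h)),
        fun h => (hrel j i).mpr
          (T.rel_down' i.val j.val k.val (Fin.lt_def.mp hij) (Fin.lt_def.mp hjk) ((hrel k i).mp h))⟩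
  · rintro ⟨hc1, hc2⟩
    exact build n lhd hpo hc1 hc2
end

section
/- For every binary tree T of size n, the partial order ⊲_T is an adapted order to the path algebra Λₙ of the equioriented quiver 1 → 2 → ⋯ → n. -/
lemma btree_key : ∀ (T : BTree) (i j : ℕ), i ≤ j → j < T.size → ¬ T.rel i j → ¬ T.rel j i →
    ∃ k, i ≤ k ∧ k ≤ j ∧ T.rel i k ∧ T.rel j k := by
  intro T
  induction T with
  | nil => intro i j _ hj; simp [BTree.size] at hj
  | node l r ihl ihr =>
    intro i j hij hj hnij hnji
    have hj' : j < l.size + 1 + r.size := hj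
    by_cases hjm : j < l.size
    · have h1 : ¬ l.rel i j := fun h => hnij (Or.inr (Or.inl h))
      have h2 : ¬ l.rel j i := fun h => hnji (Or.inr (Or.inl h))
      obtain ⟨k, hik, hkj, ha, hb⟩ := ihl i j hij hjm h1 h2
      exact ⟨k, hik, hkj, Or.inr (Or.inl ha), Or.inr (Or.inl hb)⟩
    · by_cases hje : j = l.size
      · exact absurd (Or.inl ⟨hje, by omega⟩) hnij
      · have hjgt : l.size < j := by omega
        by_cases him : i < l.size
        · exact ⟨l.size, by omega, by omega, Or.inl ⟨rfl, by omega⟩, Or.inl ⟨rfl, hj'⟩⟩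
        · by_cases hie : i = l.size
          · exact absurd (Or.inl ⟨hie, hj'⟩) hnji
          · have hir : l.size < i := by omega
            have h1 : ¬ r.rel (i - (l.size + 1)) (j - (l.size + 1)) :=
              fun h => hnij (Or.inr (Or.inr ⟨hir, hjgt, h⟩))
            have h2 : ¬ r.rel (j - (l.size + 1)) (i - (l.size + 1)) :=
              fun h => hnji (Or.inr (Or.inr ⟨hjgt, hir, h⟩))
            obtain ⟨k', hik, hkj, ha, hb⟩ := ihr _ _ (by omega) (by omega) h1 h2
            have heq : k' + (l.size + 1) - (l.size + 1) = k' := by omega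
            refine ⟨k' + (l.size + 1), by omega, by omega, ?_, ?_⟩
            · exact Or.inr (Or.inr ⟨hir, by omega, by rw [heq]; exact ha⟩)
            · exact Or.inr (Or.inr ⟨hjgt, by omega, by rw [heq]; exact hb⟩)

/-- `⊲_T` is adapted to `Λₙ`. -/
theorem btree_order_adapted (n : ℕ) (T : BTree) (hT : T.size = n) :
    ∀ i j : Fin n, i.val ≤ j.val → ¬ T.rel i.val j.val → ¬ T.rel j.val i.val →
      ∃ k : Fin n, i.val ≤ k.val ∧ k.val ≤ j.val ∧ T.rel i.val k.val ∧ T.rel j.val k.val := by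
  intro i j hij hnij hnji
  obtain ⟨k, hik, hkj, ha, hb⟩ := btree_key T i.val j.val hij (by omega) hnij hnji
  exact ⟨⟨k, by omega⟩, hik, hkj, ha, hb⟩
end

section
/- The map sending a binary tree T of size n to the equivalence class of the partial order ⊲_T is a bijection from the set of binary trees with n vertices to the set of equivalence classes of adapted partial orders to Λₙ. In particular, the number of quasi-hereditary structures on Λₙ equals the n-th Catalan number Cₙ = (1/(n+1))·binom(2n, n). -/
/-!
STATEMENT 5.  The map sending a binary tree `T` of size `n` to the equivalence class of the
adapted order `⊲_T` is a bijection between binary trees with `n` vertices and equivalence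
classes of adapted orders to `Λₙ` (the path algebra of `1 → ⋯ → n`), so the number of
quasi-hereditary structures on `Λₙ` is the `n`-th Catalan number.

`Λₙ` is the incidence algebra of the chain: adaptedness, the decreasing relation `Dec(⊲)`
(composition factors of standard modules) and the increasing relation `Inc(⊲)` (composition
factors of costandard modules) are given by the interval characterizations below, and two
adapted orders are equivalent (same standard and costandard modules) iff they have the same
`Dec` and `Inc` relations.
-/

section
variable {V : Type*} (le : V → V → Prop)

/-- Adaptedness of `⊲` with respect to the order `le` (the interval criterion). -/
def AdaptedG (lhd : V → V → Prop) : Prop :=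
  ∀ i j : V, le i j → ¬ lhd i j → ¬ lhd j i →
    ∃ k : V, le i k ∧ le k j ∧ lhd i k ∧ lhd j k

/-- `(x, y) ∈ Dec(⊲)`: `S(x)` is a composition factor of the standard module `Δ(y)`. -/
def DecRelG (lhd : V → V → Prop) (x y : V) : Prop :=
  le y x ∧ ∀ k : V, le y k → le k x → lhd k y

/-- `(x, y) ∈ Inc(⊲)`: `S(x)` is a composition factor of the costandard module `∇(y)`. -/
def IncRelG (lhd : V → V → Prop) (x y : V) : Prop :=
  le x y ∧ ∀ k : V, le x k → le k y → lhd k y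

/-- Equivalence of adapted orders: equal standard and costandard modules. -/
def QHEquivG (lhd₁ lhd₂ : V → V → Prop) : Prop :=
  (∀ x y, DecRelG le lhd₁ x y ↔ DecRelG le lhd₂ x y) ∧
  (∀ x y, IncRelG le lhd₁ x y ↔ IncRelG le lhd₂ x y)

end

/-!
The `⊲_T`-down-set of a label `j` is the interval `[lo j, hi j]` of labels of the subtree at `j`,
so `Dec(⊲_T)` and `Inc(⊲_T)` record exactly these spans, and the spans determine `T`.
Conversely, adaptedness forces every interval of labels to have a `⊲`-greatest element
(an incomparable pair has a common upper bound between them). Taking the top of all labels as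
the root and recursing on both sides builds a tree whose spans are the `Dec`/`Inc` data of `⊲`,
since each side stays below its neighbouring roots. So `T ↦ [⊲_T]` is a bijection, and binary
trees with `n` vertices are counted by the Catalan numbers.
-/

namespace BTree

/-- `lo j` and `hi j`: the subtree rooted at the in-order label `j` carries exactly the labels
`lo j, …, hi j` (`rel_iff`). -/
def lo : BTree → ℕ → ℕ
  | .nil, _ => 0
  | .node l r, j =>
    if j < l.size then l.lo j
    else if j = l.size then 0
    else l.size + 1 + r.lo (j - (l.size + 1))

def hi : BTree → ℕ → ℕ
  | .nil, _ => 0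
  | .node l r, j =>
    if j < l.size then l.hi j
    else if j = l.size then l.size + r.size
    else l.size + 1 + r.hi (j - (l.size + 1))

section Node

variable {l r : BTree} {j : ℕ}

theorem lo_node_of_lt (h : j < l.size) : (node l r).lo j = l.lo j := by
  simp only [lo, if_pos h]

theorem hi_node_of_lt (h : j < l.size) : (node l r).hi j = l.hi j := by
  simp only [hi, if_pos h]

theorem lo_node_of_eq (h : j = l.size) : (node l r).lo j = 0 := by
  simp [lo, h]

theorem hi_node_of_eq (h : j = l.size) : (node l r).hi j = l.size + r.size := by
  simp [hi, h]

theorem lo_node_of_gt (h : l.size < j) :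
    (node l r).lo j = l.size + 1 + r.lo (j - (l.size + 1)) := by
  simp only [lo, if_neg (show ¬ j < l.size by omega), if_neg (show ¬ j = l.size by omega)]

theorem hi_node_of_gt (h : l.size < j) :
    (node l r).hi j = l.size + 1 + r.hi (j - (l.size + 1)) := by
  simp only [hi, if_neg (show ¬ j < l.size by omega), if_neg (show ¬ j = l.size by omega)]

end Node

theorem lo_le_self_le_hi_lt : ∀ {T : BTree} {j : ℕ}, j < T.size →
    T.lo j ≤ j ∧ j ≤ T.hi j ∧ T.hi j < T.size
  | .nil, _, h => absurd h (Nat.not_lt_zero _)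
  | .node l r, j, h => by
    simp only [size] at h ⊢
    rcases lt_trichotomy j l.size with hj | hj | hj
    · rw [lo_node_of_lt hj, hi_node_of_lt hj]
      have := lo_le_self_le_hi_lt hj
      omega
    · rw [lo_node_of_eq hj, hi_node_of_eq hj]
      omega
    · rw [lo_node_of_gt hj, hi_node_of_gt hj]
      have := lo_le_self_le_hi_lt (T := r) (j := j - (l.size + 1)) (by omega)
      omega

theorem lt_size_of_rel : ∀ {T : BTree} {i j : ℕ}, T.rel i j → i < T.size ∧ j < T.size
  | .nil, _, _, h => h.elim
  | .node l r, i, j, h => by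
    simp only [size]
    rcases h with ⟨rfl, hi⟩ | h | ⟨h1, h2, h3⟩
    · omega
    · have := lt_size_of_rel h; omega
    · have := lt_size_of_rel h3; omega

theorem rel_iff : ∀ {T : BTree} {i j : ℕ}, j < T.size →
    (T.rel i j ↔ T.lo j ≤ i ∧ i ≤ T.hi j)
  | .nil, _, _, h => absurd h (Nat.not_lt_zero _)
  | .node l r, i, j, h => by
    simp only [size] at h
    rcases lt_trichotomy j l.size with hj | hj | hj
    · rw [lo_node_of_lt hj, hi_node_of_lt hj, ← rel_iff hj]
      constructor
      · rintro (⟨rfl, -⟩ | h | ⟨-, h, -⟩)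
        · omega
        · exact h
        · omega
      · exact fun h => .inr (.inl h)
    · rw [lo_node_of_eq hj, hi_node_of_eq hj]
      constructor
      · rintro (⟨-, h⟩ | h | ⟨-, h, -⟩)
        · omega
        · have := lt_size_of_rel h; omega
        · omega
      · exact fun h => .inl ⟨hj, by omega⟩
    · have hj' : j - (l.size + 1) < r.size := by omega
      have := lo_le_self_le_hi_lt hj'
      rw [lo_node_of_gt hj, hi_node_of_gt hj]
      constructor
      · rintro (⟨rfl, -⟩ | h | ⟨hi, -, h⟩)
        · omega
        · have := lt_size_of_rel h; omega
        · rw [rel_iff hj'] at h; omega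
      · intro hi
        exact .inr (.inr ⟨by omega, hj, (rel_iff hj').mpr ⟨by omega, by omega⟩⟩)

theorem span_nested : ∀ {T : BTree} {j k : ℕ}, k < T.size → T.lo k ≤ j → j ≤ T.hi k →
    T.lo k ≤ T.lo j ∧ T.hi j ≤ T.hi k
  | .nil, _, _, h, _, _ => absurd h (Nat.not_lt_zero _)
  | .node l r, j, k, hk, h1, h2 => by
    simp only [size] at hk
    rcases lt_trichotomy k l.size with hkl | hkl | hkl
    · rw [lo_node_of_lt hkl] at h1
      rw [hi_node_of_lt hkl] at h2
      rw [lo_node_of_lt hkl, hi_node_of_lt hkl]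
      have hjl : j < l.size := lt_of_le_of_lt h2 (lo_le_self_le_hi_lt hkl).2.2
      rw [lo_node_of_lt hjl, hi_node_of_lt hjl]
      exact span_nested hkl h1 h2
    · rw [hi_node_of_eq hkl] at h2
      rw [lo_node_of_eq hkl, hi_node_of_eq hkl]
      rcases lt_trichotomy j l.size with hjl | hjl | hjl
      · rw [lo_node_of_lt hjl, hi_node_of_lt hjl]
        have := lo_le_self_le_hi_lt hjl
        omega
      · rw [lo_node_of_eq hjl, hi_node_of_eq hjl]
        omega
      · rw [lo_node_of_gt hjl, hi_node_of_gt hjl]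
        have := lo_le_self_le_hi_lt (T := r) (j := j - (l.size + 1)) (by omega)
        omega
    · rw [lo_node_of_gt hkl] at h1
      rw [hi_node_of_gt hkl] at h2
      rw [lo_node_of_gt hkl, hi_node_of_gt hkl]
      have hk' : k - (l.size + 1) < r.size := by omega
      have hjl : l.size < j := by have := lo_le_self_le_hi_lt hk'; omega
      rw [lo_node_of_gt hjl, hi_node_of_gt hjl]
      have := span_nested (j := j - (l.size + 1)) hk' (by omega) (by omega)
      omega

theorem rel_refl {T : BTree} {j : ℕ} (h : j < T.size) : T.rel j j := by
  have := lo_le_self_le_hi_lt h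
  exact (rel_iff h).mpr ⟨this.1, this.2.1⟩

theorem rel_trans {T : BTree} {i j k : ℕ} (hij : T.rel i j) (hjk : T.rel j k) : T.rel i k := by
  have hk := (lt_size_of_rel hjk).2
  rw [rel_iff (lt_size_of_rel hij).2] at hij
  rw [rel_iff hk] at hjk ⊢
  have := span_nested hk hjk.1 hjk.2
  omega

theorem rel_antisymm : ∀ {T : BTree} {i j : ℕ}, T.rel i j → T.rel j i → i = j
  | .nil, _, _, h, _ => h.elim
  | .node l r, i, j, h₁, h₂ => by
    rcases h₁ with ⟨rfl, -⟩ | h₁ | ⟨hi, hj, h₁⟩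
    · rcases h₂ with ⟨rfl, -⟩ | h₂ | ⟨hj, -, -⟩
      · rfl
      · have := lt_size_of_rel h₂; omega
      · omega
    · have := lt_size_of_rel h₁
      rcases h₂ with ⟨rfl, -⟩ | h₂ | ⟨hj, -, -⟩
      · omega
      · exact rel_antisymm h₁ h₂
      · omega
    · rcases h₂ with ⟨rfl, -⟩ | h₂ | ⟨-, -, h₂⟩
      · omega
      · have := lt_size_of_rel h₂; omega
      · have := rel_antisymm h₁ h₂; omega

/-- The witness is the lowest common ancestor of `i` and `j`. -/
theorem rel_adapted : ∀ {T : BTree} {i j : ℕ}, i ≤ j → j < T.size →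
    ¬ T.rel i j → ¬ T.rel j i → ∃ k, i ≤ k ∧ k ≤ j ∧ T.rel i k ∧ T.rel j k
  | .nil, _, _, _, hj, _, _ => absurd hj (Nat.not_lt_zero _)
  | .node l r, i, j, hij, hj, hn₁, hn₂ => by
    simp only [size] at hj
    rcases lt_trichotomy j l.size with hjl | hjl | hjl
    · obtain ⟨k, hk⟩ := rel_adapted hij hjl (fun h => hn₁ (.inr (.inl h)))
        (fun h => hn₂ (.inr (.inl h)))
      exact ⟨k, hk.1, hk.2.1, .inr (.inl hk.2.2.1), .inr (.inl hk.2.2.2)⟩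
    · exact absurd (.inl ⟨hjl, by omega⟩) hn₁
    rcases lt_trichotomy i l.size with hil | hil | hil
    · exact ⟨l.size, by omega, by omega, .inl ⟨rfl, by omega⟩, .inl ⟨rfl, by omega⟩⟩
    · exact absurd (.inl ⟨hil, by omega⟩) hn₂
    obtain ⟨k, hk₁, hk₂, hik, hjk⟩ := rel_adapted (i := i - (l.size + 1)) (by omega)
      (show j - (l.size + 1) < r.size by omega)
      (fun h => hn₁ (.inr (.inr ⟨hil, hjl, h⟩)))
      (fun h => hn₂ (.inr (.inr ⟨hjl, hil, h⟩)))
    have hk : l.size + 1 + k - (l.size + 1) = k := by omega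
    exact ⟨l.size + 1 + k, by omega, by omega, .inr (.inr ⟨by omega, by omega, by rwa [hk]⟩),
      .inr (.inr ⟨by omega, by omega, by rwa [hk]⟩)⟩

/-- The root is the unique label whose span contains every label. -/
theorem eq_of_lo_eq_of_hi_eq : ∀ {T T' : BTree}, T.size = T'.size →
    (∀ j < T.size, T.lo j = T'.lo j ∧ T.hi j = T'.hi j) → T = T'
  | .nil, .nil, _, _ => rfl
  | .nil, .node _ _, hs, _ => by simp only [size] at hs; omega
  | .node _ _, .nil, hs, _ => by simp only [size] at hs; omega
  | .node l r, .node l' r', hs, hsp => by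
    simp only [size] at hs hsp
    have hroot : l.size = l'.size := by
      have h := hsp l.size (by omega)
      rw [lo_node_of_eq rfl, hi_node_of_eq rfl] at h
      rcases lt_trichotomy l.size l'.size with hlt | heq | hgt
      · rw [hi_node_of_lt hlt] at h
        have := (lo_le_self_le_hi_lt hlt).2.2
        omega
      · exact heq
      · rw [lo_node_of_gt hgt] at h
        omega
    have hleft : l = l' := eq_of_lo_eq_of_hi_eq hroot fun j hj => by
      have h := hsp j (by omega)
      rwa [lo_node_of_lt hj, hi_node_of_lt hj, lo_node_of_lt (hroot ▸ hj),
        hi_node_of_lt (hroot ▸ hj)] at h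
    have hright : r = r' := eq_of_lo_eq_of_hi_eq (by omega) fun j hj => by
      have h := hsp (l.size + 1 + j) (by omega)
      rw [lo_node_of_gt (by omega), hi_node_of_gt (by omega), lo_node_of_gt (by omega),
        hi_node_of_gt (by omega), ← hroot, add_tsub_cancel_left] at h
      omega
    rw [hleft, hright]

end BTree

/-- A partial order on `{0, …, n - 1}` adapted to the natural order, encoded as a relation
on `ℕ` that relates nothing outside `{0, …, n - 1}`. -/
structure IsAdaptedBelow (n : ℕ) (L : ℕ → ℕ → Prop) : Prop where
  refl : ∀ i < n, L i i
  antisymm : ∀ {i j}, L i j → L j i → i = j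
  trans : ∀ {i j k}, L i j → L j k → L i k
  lt_of_rel : ∀ {i j}, L i j → i < n ∧ j < n
  adapted : ∀ {i j}, i ≤ j → j < n → ¬ L i j → ¬ L j i →
    ∃ k, i ≤ k ∧ k ≤ j ∧ L i k ∧ L j k

def IsIntervalTop (L : ℕ → ℕ → Prop) (a b m : ℕ) : Prop :=
  a ≤ m ∧ m ≤ b ∧ ∀ k, a ≤ k → k ≤ b → L k m

namespace IsAdaptedBelow

variable {n : ℕ} {L : ℕ → ℕ → Prop}

theorem exists_isIntervalTop (hL : IsAdaptedBelow n L) (a : ℕ) :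
    ∀ d, a + d < n → ∃ m, IsIntervalTop L a (a + d) m
  | 0, ha => ⟨a, le_rfl, le_rfl, fun k hk₁ hk₂ => by
      obtain rfl : k = a := by omega
      exact hL.refl k ha⟩
  | d + 1, ha => by
    obtain ⟨m, ham, hmd, hm⟩ := hL.exists_isIntervalTop a d (by omega)
    set e := a + (d + 1)
    have extend : ∀ t, a ≤ t → t ≤ e → L m t → L e t → IsIntervalTop L a e t :=
      fun t hat hte hmt het => ⟨hat, hte, fun k hak hke => by
        rcases Nat.lt_or_ge k e with hk | hk
        · exact hL.trans (hm k hak (by omega)) hmt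
        · obtain rfl : k = e := by omega
          exact het⟩
    by_cases hem : L e m
    · exact ⟨m, extend m ham (by omega) (hL.refl m (by omega)) hem⟩
    by_cases hme : L m e
    · exact ⟨e, extend e (by omega) le_rfl hme (hL.refl e ha)⟩
    -- `m` and `e` are incomparable, so adaptedness puts a common upper bound between them
    obtain ⟨t, hmt, hte, hmt', het⟩ := hL.adapted (by omega) ha hme hem
    exact ⟨t, extend t (by omega) hte hmt' het⟩

theorem decRelG_top_iff (hL : IsAdaptedBelow n L) {a b m : ℕ} (hm : IsIntervalTop L a b m)
    (hb : b + 1 < n → L m (b + 1)) (x : ℕ) :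
    DecRelG (fun i j : ℕ => i ≤ j) L x m ↔ m ≤ x ∧ x ≤ b := by
  obtain ⟨ham, hmb, hm⟩ := hm
  constructor
  · rintro ⟨hmx, hx⟩
    refine ⟨hmx, not_lt.mp fun hbx => ?_⟩
    have hbm : L (b + 1) m := hx _ (by omega) hbx
    have := hL.antisymm hbm (hb (hL.lt_of_rel hbm).1)
    omega
  · rintro ⟨hmx, hxb⟩
    exact ⟨hmx, fun k hmk hkx => hm k (by omega) (by omega)⟩

theorem incRelG_top_iff (hL : IsAdaptedBelow n L) {a b m : ℕ} (hm : IsIntervalTop L a b m)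
    (ha : 0 < a → L m (a - 1)) (x : ℕ) :
    IncRelG (fun i j : ℕ => i ≤ j) L x m ↔ a ≤ x ∧ x ≤ m := by
  obtain ⟨ham, hmb, hm⟩ := hm
  constructor
  · rintro ⟨hxm, hx⟩
    refine ⟨not_lt.mp fun hxa => ?_, hxm⟩
    have := hL.antisymm (hx _ (by omega) (by omega)) (ha (by omega))
    omega
  · rintro ⟨hax, hxm⟩
    exact ⟨hxm, fun k hxk hkm => hm k (by omega) (by omega)⟩

end IsAdaptedBelow

open Classical in
noncomputable def intervalTop (L : ℕ → ℕ → Prop) (a b : ℕ) : ℕ :=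
  if h : ∃ m, IsIntervalTop L a b m then h.choose else a

section intervalTop

variable {L : ℕ → ℕ → Prop} {a b : ℕ}

theorem le_intervalTop : a ≤ intervalTop L a b := by
  unfold intervalTop
  split
  · next h => exact h.choose_spec.1
  · exact le_rfl

theorem intervalTop_le (h : a ≤ b) : intervalTop L a b ≤ b := by
  unfold intervalTop
  split
  · next h => exact h.choose_spec.2.1
  · exact h

theorem isIntervalTop_intervalTop (h : ∃ m, IsIntervalTop L a b m) :
    IsIntervalTop L a b (intervalTop L a b) := by
  rw [intervalTop, dif_pos h]
  exact h.choose_spec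

end intervalTop

/-- A tree of size `len` whose label `j` stands for `a + j`; its root is the `L`-top of
`[a, a + len - 1]`. -/
noncomputable def build_s5 (L : ℕ → ℕ → Prop) (a : ℕ) : ℕ → BTree
  | 0 => .nil
  | len + 1 =>
      .node (build_s5 L a (intervalTop L a (a + len) - a))
            (build_s5 L (intervalTop L a (a + len) + 1) (a + len - intervalTop L a (a + len)))
  termination_by len => len
  decreasing_by
  · have := @intervalTop_le L a (a + len) (by omega)
    omega
  · have := @le_intervalTop L a (a + len)
    omega

theorem build_succ (L : ℕ → ℕ → Prop) (a len : ℕ) :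
    build_s5 L a (len + 1) =
      .node (build_s5 L a (intervalTop L a (a + len) - a))
        (build_s5 L (intervalTop L a (a + len) + 1) (a + len - intervalTop L a (a + len))) := by
  rw [build_s5]

theorem size_build (L : ℕ → ℕ → Prop) (len : ℕ) : ∀ a, (build_s5 L a len).size = len := by
  induction len using Nat.strong_induction_on with
  | _ len ih =>
  intro a
  obtain _ | len := len
  · rw [build_s5, BTree.size]
  have := @le_intervalTop L a (a + len)
  have := @intervalTop_le L a (a + len) (by omega)
  rw [build_succ, BTree.size, ih _ (by omega), ih _ (by omega)]
  omega

/-- Every label of `[a, b)` lies `L`-below the neighbours `a - 1` and `b` of the interval (when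
these are labels): the invariant satisfied by the label interval of every subtree of `build`. -/
def Bordered (n : ℕ) (L : ℕ → ℕ → Prop) (a b : ℕ) : Prop :=
  ∀ k, a ≤ k → k < b → (0 < a → L k (a - 1)) ∧ (b < n → L k b)

namespace Bordered

variable {n : ℕ} {L : ℕ → ℕ → Prop} {a b m : ℕ}

theorem left_of_top (hB : Bordered n L a (b + 1)) (hm : IsIntervalTop L a b m) :
    Bordered n L a m := fun k hak hkm => by
  have := hm.2.1
  exact ⟨(hB k hak (by omega)).1, fun _ => hm.2.2 k hak (by omega)⟩

theorem right_of_top (hB : Bordered n L a (b + 1)) (hm : IsIntervalTop L a b m) :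
    Bordered n L (m + 1) (b + 1) :=
  fun k hmk hkb => ⟨fun _ => hm.2.2 k (by have := hm.1; omega) (by omega),
    (hB k (by have := hm.1; omega) hkb).2⟩

end Bordered

theorem IsAdaptedBelow.spans_build {n : ℕ} {L : ℕ → ℕ → Prop} (hL : IsAdaptedBelow n L)
    (len : ℕ) : ∀ a, a + len ≤ n → Bordered n L a (a + len) → ∀ j < len,
      (∀ x, DecRelG (fun i j : ℕ => i ≤ j) L x (a + j) ↔
        a + j ≤ x ∧ x ≤ a + (build_s5 L a len).hi j) ∧
      (∀ x, IncRelG (fun i j : ℕ => i ≤ j) L x (a + j) ↔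
        a + (build_s5 L a len).lo j ≤ x ∧ x ≤ a + j) := by
  induction len using Nat.strong_induction_on with
  | _ len ih =>
  intro a han hB j hj
  obtain _ | len := len
  · omega
  have hm := isIntervalTop_intervalTop (hL.exists_isIntervalTop a len (by omega))
  rw [build_succ]
  set m := intervalTop L a (a + len)
  have ham := hm.1
  have hmb := hm.2.1
  have hsize := size_build L (m - a) a
  rcases lt_trichotomy j (m - a) with hj | rfl | hj
  · rw [BTree.lo_node_of_lt (by omega), BTree.hi_node_of_lt (by omega)]
    exact ih (m - a) (by omega) a (by omega) (by simpa [ham] using hB.left_of_top hm) j hj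
  · have hmB := hB m ham (by omega)
    rw [BTree.lo_node_of_eq hsize.symm, BTree.hi_node_of_eq hsize.symm, hsize,
      size_build, add_tsub_cancel_of_le ham, add_zero,
      show a + (m - a + (a + len - m)) = a + len by omega]
    exact ⟨hL.decRelG_top_iff hm hmB.2, hL.incRelG_top_iff hm hmB.1⟩
  · obtain ⟨j, rfl⟩ : ∃ j', j = m - a + 1 + j' := ⟨j - (m - a + 1), by omega⟩
    have hshift : ∀ t, a + (m - a + 1 + t) = m + 1 + t := fun t => by omega
    rw [BTree.lo_node_of_gt (by omega), BTree.hi_node_of_gt (by omega), hsize,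
      add_tsub_cancel_left, hshift, hshift, hshift]
    exact ih (a + len - m) (by omega) (m + 1) (by omega)
      (by simpa [show m + 1 + (a + len - m) = a + len + 1 by omega] using hB.right_of_top hm)
      j (by omega)

section QHEquivG

variable {V : Type*} {le : V → V → Prop} {l₁ l₂ l₃ : V → V → Prop}

theorem QHEquivG.rfl : QHEquivG le l₁ l₁ :=
  ⟨fun _ _ => Iff.rfl, fun _ _ => Iff.rfl⟩

theorem QHEquivG.symm (h : QHEquivG le l₁ l₂) : QHEquivG le l₂ l₁ :=
  ⟨fun x y => (h.1 x y).symm, fun x y => (h.2 x y).symm⟩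

theorem QHEquivG.trans (h : QHEquivG le l₁ l₂) (h' : QHEquivG le l₂ l₃) :
    QHEquivG le l₁ l₃ :=
  ⟨fun x y => (h.1 x y).trans (h'.1 x y), fun x y => (h.2 x y).trans (h'.2 x y)⟩

end QHEquivG

section Fin

variable {n : ℕ}

def natRel (lhd : Fin n → Fin n → Prop) (i j : ℕ) : Prop :=
  ∃ (hi : i < n) (hj : j < n), lhd ⟨i, hi⟩ ⟨j, hj⟩

theorem isAdaptedBelow_natRel_iff {lhd : Fin n → Fin n → Prop} :
    IsAdaptedBelow n (natRel lhd) ↔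
      IsPartialOrder (Fin n) lhd ∧ AdaptedG (fun a b : Fin n => a ≤ b) lhd := by
  constructor
  · intro hL
    refine ⟨{ refl := fun i => ?_, trans := fun i j k hij hjk => ?_
              antisymm := fun i j hij hji => ?_ }, fun i j hij hn₁ hn₂ => ?_⟩
    · exact (hL.refl i i.isLt).2.2
    · exact (hL.trans ⟨i.isLt, j.isLt, hij⟩ ⟨j.isLt, k.isLt, hjk⟩).2.2
    · exact Fin.ext (hL.antisymm ⟨i.isLt, j.isLt, hij⟩ ⟨j.isLt, i.isLt, hji⟩)
    · obtain ⟨k, hik, hkj, ⟨_, hk, hik'⟩, ⟨_, _, hjk⟩⟩ :=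
        hL.adapted (Fin.le_def.mp hij) j.isLt
        (fun ⟨_, _, h⟩ => hn₁ h) (fun ⟨_, _, h⟩ => hn₂ h)
      exact ⟨⟨k, hk⟩, hik, hkj, hik', hjk⟩
  · rintro ⟨hpo, hA⟩
    refine ⟨fun i hi => ⟨hi, hi, hpo.refl _⟩, ?_, ?_,
      fun ⟨hi, hj, _⟩ => ⟨hi, hj⟩, ?_⟩
    · rintro i j ⟨hi, hj, hij⟩ ⟨_, _, hji⟩
      exact congrArg Fin.val (hpo.antisymm _ _ hij hji)
    · rintro i j k ⟨hi, hj, hij⟩ ⟨_, hk, hjk⟩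
      exact ⟨hi, hk, hpo.trans _ _ _ hij hjk⟩
    · intro i j hij hj hn₁ hn₂
      have hi : i < n := lt_of_le_of_lt hij hj
      obtain ⟨k, hik, hkj, hik', hjk⟩ := hA ⟨i, hi⟩ ⟨j, hj⟩ hij
        (fun h => hn₁ ⟨hi, hj, h⟩) (fun h => hn₂ ⟨hj, hi, h⟩)
      exact ⟨k, hik, hkj, ⟨hi, k.isLt, hik'⟩, ⟨hj, k.isLt, hjk⟩⟩

theorem decRelG_iff_natRel (lhd : Fin n → Fin n → Prop) (x y : Fin n) :
    DecRelG (fun a b : Fin n => a ≤ b) lhd x y ↔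
      DecRelG (fun a b : ℕ => a ≤ b) (natRel lhd) x y := by
  refine and_congr_right fun _ => ⟨fun h k hyk hkx => ?_, fun h k hyk hkx => ?_⟩
  · have hk : k < n := lt_of_le_of_lt hkx x.isLt
    exact ⟨hk, y.isLt, h ⟨k, hk⟩ hyk hkx⟩
  · exact (h k hyk hkx).2.2

theorem incRelG_iff_natRel (lhd : Fin n → Fin n → Prop) (x y : Fin n) :
    IncRelG (fun a b : Fin n => a ≤ b) lhd x y ↔
      IncRelG (fun a b : ℕ => a ≤ b) (natRel lhd) x y := by
  refine and_congr_right fun _ => ⟨fun h k hxk hky => ?_, fun h k hxk hky => ?_⟩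
  · have hk : k < n := lt_of_le_of_lt hky y.isLt
    exact ⟨hk, y.isLt, h ⟨k, hk⟩ hxk hky⟩
  · exact (h k hxk hky).2.2

end Fin

namespace BTree

variable {n : ℕ} {T T' : BTree}

theorem isAdaptedBelow_rel (T : BTree) : IsAdaptedBelow T.size T.rel :=
  ⟨fun _ => rel_refl, rel_antisymm, rel_trans, lt_size_of_rel, rel_adapted⟩

theorem natRel_rel (hT : T.size = n) : natRel (fun i j : Fin n => T.rel i j) = T.rel := by
  ext i j
  exact ⟨fun ⟨_, _, h⟩ => h,
    fun h => ⟨hT ▸ (lt_size_of_rel h).1, hT ▸ (lt_size_of_rel h).2, h⟩⟩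

theorem isPartialOrder_rel_and_adapted (hT : T.size = n) :
    IsPartialOrder (Fin n) (fun i j => T.rel i j) ∧
      AdaptedG (fun a b : Fin n => a ≤ b) (fun i j => T.rel i j) := by
  rw [← isAdaptedBelow_natRel_iff, natRel_rel hT, ← hT]
  exact T.isAdaptedBelow_rel

theorem decRelG_rel_iff (hT : T.size = n) (x y : Fin n) :
    DecRelG (fun a b : Fin n => a ≤ b) (fun i j => T.rel i j) x y ↔
      (y : ℕ) ≤ x ∧ (x : ℕ) ≤ T.hi y := by
  have hy : (y : ℕ) < T.size := hT ▸ y.isLt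
  have := lo_le_self_le_hi_lt hy
  rw [decRelG_iff_natRel, natRel_rel hT]
  refine and_congr_right fun hyx =>
    ⟨fun h => ((rel_iff hy).mp (h x hyx le_rfl)).2, fun h k hyk hkx => ?_⟩
  exact (rel_iff hy).mpr ⟨by omega, by omega⟩

theorem incRelG_rel_iff (hT : T.size = n) (x y : Fin n) :
    IncRelG (fun a b : Fin n => a ≤ b) (fun i j => T.rel i j) x y ↔
      (x : ℕ) ≤ y ∧ T.lo y ≤ x := by
  have hy : (y : ℕ) < T.size := hT ▸ y.isLt
  have := lo_le_self_le_hi_lt hy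
  rw [incRelG_iff_natRel, natRel_rel hT]
  refine and_congr_right fun hxy =>
    ⟨fun h => ((rel_iff hy).mp (h x le_rfl hxy)).1, fun h k hxk hky => ?_⟩
  exact (rel_iff hy).mpr ⟨by omega, by omega⟩

theorem hi_le_and_lo_le_of_qhEquivG (hT : T.size = n) (hT' : T'.size = n)
    (h : QHEquivG (fun a b : Fin n => a ≤ b) (fun i j => T.rel i j) (fun i j => T'.rel i j))
    {j : ℕ} (hj : j < n) : T.hi j ≤ T'.hi j ∧ T'.lo j ≤ T.lo j := by
  have := lo_le_self_le_hi_lt (hT ▸ hj)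
  have hdec := h.1 ⟨T.hi j, by omega⟩ ⟨j, hj⟩
  have hinc := h.2 ⟨T.lo j, by omega⟩ ⟨j, hj⟩
  rw [decRelG_rel_iff hT, decRelG_rel_iff hT'] at hdec
  rw [incRelG_rel_iff hT, incRelG_rel_iff hT'] at hinc
  exact ⟨(hdec.mp ⟨this.2.1, le_rfl⟩).2, (hinc.mp ⟨this.1, le_rfl⟩).2⟩

theorem eq_of_qhEquivG (hT : T.size = n) (hT' : T'.size = n)
    (h : QHEquivG (fun a b : Fin n => a ≤ b) (fun i j => T.rel i j) (fun i j => T'.rel i j)) :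
    T = T' :=
  eq_of_lo_eq_of_hi_eq (hT.trans hT'.symm) fun j hj => by
    have := hi_le_and_lo_le_of_qhEquivG hT hT' h (hT ▸ hj)
    have := hi_le_and_lo_le_of_qhEquivG hT' hT h.symm (hT ▸ hj)
    omega

end BTree

section TreeOf

variable {n : ℕ}

noncomputable def treeOf (lhd : Fin n → Fin n → Prop) : BTree :=
  build_s5 (natRel lhd) 0 n

theorem size_treeOf (lhd : Fin n → Fin n → Prop) : (treeOf lhd).size = n :=
  size_build _ _ _

variable {lhd : Fin n → Fin n → Prop}

theorem qhEquivG_treeOf (hpo : IsPartialOrder (Fin n) lhd)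
    (hA : AdaptedG (fun a b : Fin n => a ≤ b) lhd) :
    QHEquivG (fun a b : Fin n => a ≤ b) lhd (fun i j => (treeOf lhd).rel i j) := by
  have hspans := (isAdaptedBelow_natRel_iff.mpr ⟨hpo, hA⟩).spans_build n 0 (by omega)
    (fun _ _ _ => ⟨by omega, by omega⟩)
  simp only [zero_add] at hspans
  refine ⟨fun x y => ?_, fun x y => ?_⟩
  · rw [decRelG_iff_natRel, BTree.decRelG_rel_iff (size_treeOf lhd)]
    exact (hspans y y.isLt).1 x
  · rw [incRelG_iff_natRel, BTree.incRelG_rel_iff (size_treeOf lhd)]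
    exact ((hspans y y.isLt).2 x).trans and_comm

theorem eq_treeOf_of_qhEquivG (hpo : IsPartialOrder (Fin n) lhd)
    (hA : AdaptedG (fun a b : Fin n => a ≤ b) lhd) {T : BTree} (hT : T.size = n)
    (h : QHEquivG (fun a b : Fin n => a ≤ b) lhd (fun i j => T.rel i j)) : T = treeOf lhd :=
  BTree.eq_of_qhEquivG hT (size_treeOf lhd) (h.symm.trans (qhEquivG_treeOf hpo hA))

end TreeOf

def BTree.toBinaryTree : BTree → BinaryTree Unit
  | .nil => .nil
  | .node l r => .node () l.toBinaryTree r.toBinaryTree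

def BTree.ofBinaryTree : BinaryTree Unit → BTree
  | .nil => .nil
  | .node _ l r => .node (ofBinaryTree l) (ofBinaryTree r)

def BTree.equivBinaryTree : BTree ≃ BinaryTree Unit where
  toFun := toBinaryTree
  invFun := ofBinaryTree
  left_inv T := by induction T <;> simp_all [toBinaryTree, ofBinaryTree]
  right_inv t := by induction t <;> simp_all [toBinaryTree, ofBinaryTree]

theorem BTree.numNodes_toBinaryTree (T : BTree) : T.toBinaryTree.numNodes = T.size := by
  induction T <;> simp_all [toBinaryTree, size, BinaryTree.numNodes]
  omega

theorem BTree.card_size_eq_catalan (n : ℕ) : Nat.card {T : BTree // T.size = n} = catalan n := by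
  rw [← BinaryTree.treesOfNumNodesEq_card_eq_catalan, ← Nat.card_eq_finsetCard]
  exact Nat.card_congr <| BTree.equivBinaryTree.subtypeEquiv fun T => by
    rw [BinaryTree.mem_treesOfNumNodesEq, BTree.equivBinaryTree, Equiv.coe_fn_mk,
      BTree.numNodes_toBinaryTree]

abbrev AdaptedOrder (n : ℕ) : Type :=
  {l : Fin n → Fin n → Prop //
    IsPartialOrder (Fin n) l ∧ AdaptedG (fun a b : Fin n => a ≤ b) l}

noncomputable def adaptedOrderClassesEquiv (n : ℕ) :
    Quot (fun l₁ l₂ : AdaptedOrder n => QHEquivG (fun a b : Fin n => a ≤ b) l₁.1 l₂.1) ≃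
      {T : BTree // T.size = n} where
  toFun := Quot.lift (fun l => ⟨treeOf l.1, size_treeOf l.1⟩) fun l₁ l₂ h =>
    Subtype.ext <| (eq_treeOf_of_qhEquivG l₂.2.1 l₂.2.2 (size_treeOf l₁.1)
      (h.symm.trans (qhEquivG_treeOf l₁.2.1 l₁.2.2)))
  invFun T := Quot.mk _ ⟨fun i j => T.1.rel i j, T.1.isPartialOrder_rel_and_adapted T.2⟩
  left_inv := Quot.ind fun l => Quot.sound (qhEquivG_treeOf l.2.1 l.2.2).symm
  right_inv T := Subtype.ext <|
    (eq_treeOf_of_qhEquivG (T.1.isPartialOrder_rel_and_adapted T.2).1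
      (T.1.isPartialOrder_rel_and_adapted T.2).2 T.2 QHEquivG.rfl).symm

/-- `T ↦ [⊲_T]` is a bijection onto equivalence classes of adapted orders to
`Λₙ`, and the number of quasi-hereditary structures on `Λₙ` is the `n`-th Catalan number. -/
theorem btree_bijection_adapted_orders_and_catalan (n : ℕ) :
    (∀ lhd : Fin n → Fin n → Prop, IsPartialOrder (Fin n) lhd →
      AdaptedG (fun a b : Fin n => a ≤ b) lhd →
      ∃! T : {T : BTree // T.size = n},
        QHEquivG (fun a b : Fin n => a ≤ b) lhd (fun i j => T.1.rel i.val j.val)) ∧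
    Nat.card (Quot (fun (l₁ l₂ : {l : Fin n → Fin n → Prop //
        IsPartialOrder (Fin n) l ∧ AdaptedG (fun a b : Fin n => a ≤ b) l}) =>
      QHEquivG (fun a b : Fin n => a ≤ b) l₁.1 l₂.1)) = catalan n := by
  refine ⟨fun lhd hpo hA => ⟨⟨treeOf lhd, size_treeOf lhd⟩, qhEquivG_treeOf hpo hA,
    fun T hT => Subtype.ext (eq_treeOf_of_qhEquivG hpo hA T.2 hT)⟩, ?_⟩
  exact (Nat.card_congr (adaptedOrderClassesEquiv n)).trans (BTree.card_size_eq_catalan n)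
end

section
/- For the quiver D₁ with vertices 1,…,n (n ≥ 3), arrows 1 → 2 → ⋯ → n−2 and n−2 → n−1, n−2 → n, the number of quasi-hereditary structures on kD₁ equals 2·Cₙ − 3·C_{n−1}, where Cₘ denotes the m-th Catalan number. -/
/-- The path order of the quiver `D₁` on `Fin n` (0-based): a chain `0, 1, …, n-3` followed
by two incomparable top elements `n-2` and `n-1`, both above every chain vertex. -/
def D1le (n : ℕ) (a b : Fin n) : Prop :=
  a = b ∨ (a.val ≤ b.val ∧ b.val + 3 ≤ n) ∨
    (a.val + 3 ≤ n ∧ (b.val = n - 2 ∨ b.val = n - 1))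

/-!
Every adapted order has the same `Dec` and `Inc` as each of its linear extensions, so a
quasi-hereditary structure is the class of a linear order, i.e. of an injective word `w` on the
vertices. Every interval of `D₁` lies in one of its two maximal chains, and along a chain `Dec`
and `Inc` only record, for each pair `x, y`, whether `w y` is the maximum of `w` between `x` and
`y`. On a chain of length `k` these interval-maximum relations are counted by splitting at the
position of the maximum, which gives the Catalan recursion, so there are `C_k` of them. For `D₁`
with vertices `0, …, m + 1`, either a top beats the rest of its chain (`2·C_{m+1} − C_m` pairs,
by inclusion–exclusion), or the maximum sits at a chain vertex `r < m` and cuts the pair into a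
chain of length `r` and a smaller `D₁`; this recursion solves to `2·C_{m+2} − 3·C_{m+1}`.
-/

open Set Function

theorem Set.ncard_eq_sum_ncard_sep {α ι : Type*} [Fintype ι] {S : Set α} (hS : S.Finite)
    (p : ι → α → Prop) (h : ∀ a ∈ S, ∃! i, p i a) :
    S.ncard = ∑ i, {a ∈ S | p i a}.ncard := by
  have hcover : S = ⋃ i, {a ∈ S | p i a} := by
    ext a
    simp only [mem_iUnion, mem_sep_iff]
    exact ⟨fun ha => ⟨(h a ha).exists.choose, ha, (h a ha).exists.choose_spec⟩,
      fun ⟨_, ha, _⟩ => ha⟩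
  have hdisj : Pairwise (Disjoint on fun i => {a ∈ S | p i a}) := fun i j hij =>
    disjoint_left.mpr fun a hi hj => hij ((h a hi.1).unique hi.2 hj.2)
  conv_lhs => rw [hcover]
  rw [ncard_iUnion_of_finite (fun i => hS.subset (sep_subset _ _)) hdisj,
    finsum_eq_sum_of_fintype]

theorem card_quot_eq_ncard_range {A W β : Type*} {E : A → A → Prop} (hE : Equivalence E)
    (ρ : W → A) (Φ : W → β) (hρ : ∀ a, ∃ w, E a (ρ w)) (hΦ : ∀ w w', E (ρ w) (ρ w') ↔ Φ w = Φ w') :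
    Nat.card (Quot E) = (range Φ).ncard := by
  choose σ hσ using hρ
  have hwd : ∀ a b, E a b → Φ (σ a) = Φ (σ b) := fun a b hab =>
    (hΦ _ _).mp (hE.trans (hE.symm (hσ a)) (hE.trans hab (hσ b)))
  rw [← Nat.card_coe_set_eq]
  refine Nat.card_eq_of_bijective (Quot.lift (fun a => ⟨Φ (σ a), mem_range_self _⟩)
    fun a b hab => Subtype.ext (hwd a b hab)) ⟨fun qa qb => ?_, ?_⟩
  · induction qa using Quot.ind with | _ a => induction qb using Quot.ind with | _ b =>
    intro hab
    exact Quot.sound (hE.trans (hσ a) (hE.trans ((hΦ _ _).mpr (congrArg Subtype.val hab))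
      (hE.symm (hσ b))))
  · rintro ⟨_, w, rfl⟩
    exact ⟨Quot.mk _ (ρ w), Subtype.ext ((hΦ _ _).mp (hσ (ρ w))).symm⟩

theorem exists_forall_le_of_pos {k : ℕ} (hk : 0 < k) (w : ℕ → ℕ) :
    ∃ r < k, ∀ j < k, w j ≤ w r := by
  obtain ⟨r, hr, hmax⟩ := (Finset.range k).exists_max_image w ⟨0, Finset.mem_range.mpr hk⟩
  exact ⟨r, Finset.mem_range.mp hr, fun j hj => hmax j (Finset.mem_range.mpr hj)⟩

theorem injOn_shift {c k : ℕ} {w : ℕ → ℕ} (hw : InjOn w (Iio (c + k))) :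
    InjOn (fun j => w (c + j)) (Iio k) := fun a (ha : a < k) b (hb : b < k) hab => by
  have := hw (show c + a < c + k by omega) (show c + b < c + k by omega) hab
  omega

theorem catalan_succ_eq_sum_add (n : ℕ) :
    catalan (n + 1) = ∑ i : Fin n, catalan i * catalan (n - i) + catalan n := by
  rw [catalan_succ, Fin.sum_univ_castSucc]
  simp

section IntervalMax

def intervalMax (k : ℕ) (w : ℕ → ℕ) (x y : Fin k) : Prop :=
  ∀ j, min (x : ℕ) y ≤ j → j ≤ max (x : ℕ) y → w j ≤ w y

def intervalMaxRels (k : ℕ) : Set (Fin k → Fin k → Prop) :=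
  {R | ∃ w : ℕ → ℕ, InjOn w (Iio k) ∧ intervalMax k w = R}

def IsPeak {k : ℕ} (R : Fin k → Fin k → Prop) (r : Fin k) : Prop :=
  ∀ x, R x r

def window (c : ℕ) {s k : ℕ} (h : c + s ≤ k) (x : Fin s) : Fin k :=
  ⟨c + x, by omega⟩

theorem intervalMax_congr {k : ℕ} {w w' : ℕ → ℕ}
    (h : ∀ a < k, ∀ b < k, (w a ≤ w b ↔ w' a ≤ w' b)) :
    intervalMax k w = intervalMax k w' := by
  ext x y
  exact forall_congr' fun j => imp_congr_right fun _ => imp_congr_right fun hj =>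
    h j (by omega) y y.2

theorem intervalMax_congr_of_eqOn {k : ℕ} {w w' : ℕ → ℕ} (h : ∀ j < k, w j = w' j) :
    intervalMax k w = intervalMax k w' :=
  intervalMax_congr fun a ha b hb => by rw [h a ha, h b hb]

theorem intervalMax_two_mul_add (k : ℕ) (w : ℕ → ℕ) (c : ℕ) :
    intervalMax k (fun j => 2 * w j + c) = intervalMax k w :=
  intervalMax_congr fun _ _ _ _ => by omega

theorem intervalMax_comp_window {c s k : ℕ} (h : c + s ≤ k) (w : ℕ → ℕ) :
    (intervalMax k w on window c h) = intervalMax s (fun j => w (c + j)) := by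
  ext x y
  simp only [onFun, intervalMax, window]
  constructor
  · intro H j hj₁ hj₂
    exact H (c + j) (by omega) (by omega)
  · intro H j hj₁ hj₂
    have := H (j - c) (by omega) (by omega)
    rwa [Nat.add_sub_cancel' (by omega)] at this

theorem intervalMax_iff_forall_fin {k : ℕ} {v : ℕ → ℕ} {x y : Fin k} :
    intervalMax k v x y ↔ ∀ j : Fin k, min (x : ℕ) y ≤ j → (j : ℕ) ≤ max (x : ℕ) y → v j ≤ v y :=
  ⟨fun h j => h j, fun h j h₁ h₂ => h ⟨j, by omega⟩ h₁ h₂⟩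

theorem isPeak_intervalMax_iff {k : ℕ} {w : ℕ → ℕ} {r : Fin k} :
    IsPeak (intervalMax k w) r ↔ ∀ j < k, w j ≤ w r := by
  refine ⟨fun h j hj => h ⟨j, hj⟩ j (min_le_left _ _) (le_max_left _ _), fun h x j _ hj => h j ?_⟩
  omega

theorem exists_isPeak {k : ℕ} {R : Fin k → Fin k → Prop} (hR : R ∈ intervalMaxRels k)
    (hk : 0 < k) : ∃ r, IsPeak R r := by
  obtain ⟨w, -, rfl⟩ := hR
  obtain ⟨r, hr, hmax⟩ := exists_forall_le_of_pos hk w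
  exact ⟨⟨r, hr⟩, isPeak_intervalMax_iff.mpr hmax⟩

theorem IsPeak.eq {k : ℕ} {R : Fin k → Fin k → Prop} (hR : R ∈ intervalMaxRels k) {r r' : Fin k}
    (hr : IsPeak R r) (hr' : IsPeak R r') : r = r' := by
  obtain ⟨w, hw, rfl⟩ := hR
  rw [isPeak_intervalMax_iff] at hr hr'
  exact Fin.ext <| hw r.2 r'.2 <| le_antisymm (hr' r r.2) (hr r' r'.2)

theorem intervalMax_iff_of_isPeak {k : ℕ} {w : ℕ → ℕ} (hw : InjOn w (Iio k)) {r x y : Fin k}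
    (hr : IsPeak (intervalMax k w) r) (h₁ : min (x : ℕ) y ≤ r) (h₂ : (r : ℕ) ≤ max (x : ℕ) y) :
    intervalMax k w x y ↔ y = r := by
  refine ⟨fun h => Fin.ext <| hw y.2 r.2 <| le_antisymm ?_ (h r h₁ h₂), fun h => h ▸ hr x⟩
  exact isPeak_intervalMax_iff.mp hr y y.2

def splitAt {k : ℕ} (r s : ℕ) (hk : r + 1 + s = k) (R : Fin k → Fin k → Prop) :
    (Fin r → Fin r → Prop) × (Fin s → Fin s → Prop) :=
  (R on window 0 (by omega), R on window (r + 1) (by omega))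

theorem splitAt_intervalMax {k r s : ℕ} (hk : r + 1 + s = k) (w : ℕ → ℕ) :
    splitAt r s hk (intervalMax k w) = (intervalMax r w, intervalMax s fun j => w (r + 1 + j)) := by
  simp only [splitAt, intervalMax_comp_window, zero_add]

theorem exists_window_eq {c s k : ℕ} (h : c + s ≤ k) {x : Fin k} (h₁ : c ≤ x) (h₂ : x < c + s) :
    ∃ x', window c h x' = x :=
  ⟨⟨x - c, by omega⟩, Fin.ext (by simp only [window]; omega)⟩

theorem eq_of_isPeak_of_splitAt_eq {k r s : ℕ} (hk : r + 1 + s = k)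
    {R R' : Fin k → Fin k → Prop} (hR : R ∈ intervalMaxRels k) (hR' : R' ∈ intervalMaxRels k)
    (hr : IsPeak R ⟨r, by omega⟩) (hr' : IsPeak R' ⟨r, by omega⟩)
    (h : splitAt r s hk R = splitAt r s hk R') : R = R' := by
  obtain ⟨w, hw, rfl⟩ := hR
  obtain ⟨w', hw', rfl⟩ := hR'
  ext x y
  by_cases hspan : min (x : ℕ) y ≤ r ∧ r ≤ max (x : ℕ) y
  · rw [intervalMax_iff_of_isPeak hw hr hspan.1 hspan.2,
      intervalMax_iff_of_isPeak hw' hr' hspan.1 hspan.2]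
  obtain ⟨c, len, hc, hside⟩ : ∃ c len, ∃ hc : c + len ≤ k,
      (intervalMax k w on window c hc) = (intervalMax k w' on window c hc) ∧
        c ≤ min (x : ℕ) y ∧ max (x : ℕ) y < c + len := by
    by_cases hleft : max (x : ℕ) y < r
    · exact ⟨0, r, _, congrArg Prod.fst h, by omega, by omega⟩
    · exact ⟨r + 1, s, _, congrArg Prod.snd h, by omega, by omega⟩
  obtain ⟨x', rfl⟩ := exists_window_eq hc (x := x) (by omega) (by omega)
  obtain ⟨y', rfl⟩ := exists_window_eq hc (x := y) (by omega) (by omega)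
  exact iff_of_eq (congrFun₂ hside.1 x' y')

/-- The factor `2` keeps the values of `u` and `v` apart, so the glued word stays injective. -/
def peakJoin (r s : ℕ) (u v : ℕ → ℕ) (j : ℕ) : ℕ :=
  if j < r then 2 * u j
  else if j = r then 2 * ((Finset.range r).sup u ⊔ (Finset.range s).sup v) + 2
  else 2 * v (j - (r + 1)) + 1

section peakJoin

variable {r s : ℕ} {u v : ℕ → ℕ}

theorem peakJoin_of_lt {j : ℕ} (h : j < r) : peakJoin r s u v j = 2 * u j := by
  simp [peakJoin, h]

theorem peakJoin_add (j : ℕ) : peakJoin r s u v (r + 1 + j) = 2 * v j + 1 := by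
  simp [peakJoin, show ¬ r + 1 + j < r by omega, show r + 1 + j ≠ r by omega]

theorem peakJoin_lt_peak {j : ℕ} (hj : j < r + 1 + s) (hne : j ≠ r) :
    peakJoin r s u v j < peakJoin r s u v r := by
  have hpeak : peakJoin r s u v r = 2 * ((Finset.range r).sup u ⊔ (Finset.range s).sup v) + 2 := by
    simp [peakJoin]
  rw [hpeak]
  rcases lt_or_gt_of_ne hne with h | h
  · have : u j ≤ (Finset.range r).sup u := Finset.le_sup (Finset.mem_range.mpr h)
    rw [peakJoin_of_lt h]
    omega
  · obtain ⟨i, rfl⟩ : ∃ i, j = r + 1 + i := ⟨j - (r + 1), by omega⟩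
    have : v i ≤ (Finset.range s).sup v := Finset.le_sup (Finset.mem_range.mpr (by omega))
    rw [peakJoin_add]
    omega

theorem injOn_peakJoin (hu : InjOn u (Iio r)) (hv : InjOn v (Iio s)) :
    InjOn (peakJoin r s u v) (Iio (r + 1 + s)) := by
  have side : ∀ a < r + 1 + s, a ≠ r → (∃ i < r, a = i ∧ peakJoin r s u v a = 2 * u i) ∨
      ∃ i < s, a = r + 1 + i ∧ peakJoin r s u v a = 2 * v i + 1 := by
    intro a ha hne
    by_cases h : a < r
    · exact .inl ⟨a, h, rfl, peakJoin_of_lt h⟩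
    · obtain ⟨i, rfl⟩ : ∃ i, a = r + 1 + i := ⟨a - (r + 1), by omega⟩
      exact .inr ⟨i, by omega, rfl, peakJoin_add i⟩
  intro a (ha : a < _) b (hb : b < _) hab
  by_cases har : a = r
  · by_contra hne
    exact (peakJoin_lt_peak hb (by omega)).ne (har ▸ hab).symm
  by_cases hbr : b = r
  · exact absurd (hbr ▸ hab) (peakJoin_lt_peak ha har).ne
  rcases side a ha har with ⟨i, hi, rfl, hai⟩ | ⟨i, hi, rfl, hai⟩ <;>
    rcases side b hb hbr with ⟨i', hi', rfl, hbi⟩ | ⟨i', hi', rfl, hbi⟩ <;> rw [hai, hbi] at hab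
  · exact hu hi hi' (by omega)
  · omega
  · omega
  · rw [hv hi hi' (by omega)]

theorem intervalMax_peakJoin_left : intervalMax r (peakJoin r s u v) = intervalMax r u := by
  rw [← intervalMax_two_mul_add r u 0]
  exact intervalMax_congr_of_eqOn fun j hj => peakJoin_of_lt hj

theorem splitAt_intervalMax_peakJoin {k : ℕ} (hk : r + 1 + s = k) :
    splitAt r s hk (intervalMax k (peakJoin r s u v)) = (intervalMax r u, intervalMax s v) := by
  simp only [splitAt_intervalMax, intervalMax_peakJoin_left, peakJoin_add, intervalMax_two_mul_add]

end peakJoin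

theorem intervalMax_mem_intervalMaxRels_of_le {k k' : ℕ} {w : ℕ → ℕ} (hw : InjOn w (Iio k))
    (h : k' ≤ k) : intervalMax k' w ∈ intervalMaxRels k' :=
  ⟨w, hw.mono (Iio_subset_Iio h), rfl⟩

theorem image_splitAt_isPeak {k r s : ℕ} (hk : r + 1 + s = k) :
    splitAt r s hk '' {R ∈ intervalMaxRels k | IsPeak R ⟨r, by omega⟩} =
      intervalMaxRels r ×ˢ intervalMaxRels s := by
  ext ⟨L, Q⟩
  constructor
  · rintro ⟨_, ⟨⟨w, hw, rfl⟩, -⟩, hLQ⟩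
    rw [splitAt_intervalMax, Prod.mk.injEq] at hLQ
    obtain ⟨rfl, rfl⟩ := hLQ
    subst hk
    exact ⟨intervalMax_mem_intervalMaxRels_of_le hw (by omega), _, injOn_shift hw, rfl⟩
  · rintro ⟨⟨u, hu, rfl⟩, ⟨v, hv, rfl⟩⟩
    refine ⟨_, ⟨⟨_, hk ▸ injOn_peakJoin hu hv, rfl⟩, ?_⟩, splitAt_intervalMax_peakJoin hk⟩
    exact isPeak_intervalMax_iff.mpr fun j hj => by
      rcases eq_or_ne j r with rfl | hne
      · exact le_rfl
      · exact (peakJoin_lt_peak (by omega) hne).le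

theorem ncard_intervalMaxRels_isPeak {k r s : ℕ} (hk : r + 1 + s = k) :
    {R ∈ intervalMaxRels k | IsPeak R ⟨r, by omega⟩}.ncard =
      (intervalMaxRels r).ncard * (intervalMaxRels s).ncard := by
  rw [← ncard_prod, ← image_splitAt_isPeak hk, InjOn.ncard_image]
  exact fun R hR R' hR' h => eq_of_isPeak_of_splitAt_eq hk hR.1 hR'.1 hR.2 hR'.2 h

theorem ncard_intervalMaxRels (k : ℕ) : (intervalMaxRels k).ncard = catalan k := by
  induction k using Nat.strong_induction_on with
  | _ k ih =>
  rcases k with _ | m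
  · rw [catalan_zero, ncard_eq_one]
    exact ⟨intervalMax 0 id, subsingleton_of_subsingleton.eq_singleton_of_mem ⟨id, injOn_id _, rfl⟩⟩
  rw [ncard_eq_sum_ncard_sep (toFinite _) (fun r R => IsPeak R r)
    fun R hR => existsUnique_of_exists_of_unique (exists_isPeak hR m.succ_pos)
      fun r r' => IsPeak.eq hR, catalan_succ]
  refine Finset.sum_congr rfl fun r _ => ?_
  rw [ncard_intervalMaxRels_isPeak (show (r : ℕ) + 1 + (m - r) = m + 1 by omega),
    ih r (by omega), ih (m - r) (by omega)]

end IntervalMax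

section DInvariant

/-- The interval-maximum relations of a word on the vertices `0, …, m + 1` of `D₁` along its two
maximal chains `0, …, m - 1, m` and `0, …, m - 1, m + 1`. -/
def dInvariant (m : ℕ) (w : ℕ → ℕ) :
    (Fin (m + 1) → Fin (m + 1) → Prop) × (Fin (m + 1) → Fin (m + 1) → Prop) :=
  (intervalMax (m + 1) w, intervalMax (m + 1) (w ∘ Equiv.swap m (m + 1)))

def dInvariants (m : ℕ) :
    Set ((Fin (m + 1) → Fin (m + 1) → Prop) × (Fin (m + 1) → Fin (m + 1) → Prop)) :=
  {P | ∃ w : ℕ → ℕ, InjOn w (Iio (m + 2)) ∧ dInvariant m w = P}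

variable {m : ℕ}

theorem swap_lt_of_lt {j : ℕ} (hj : j < m + 2) : Equiv.swap m (m + 1) j < m + 2 := by
  rw [Equiv.swap_apply_def]
  split_ifs <;> omega

theorem injOn_comp_swap {w : ℕ → ℕ} (hw : InjOn w (Iio (m + 2))) :
    InjOn (w ∘ Equiv.swap m (m + 1)) (Iio (m + 2)) :=
  hw.comp (Equiv.injective _).injOn fun _ hj => swap_lt_of_lt hj

theorem intervalMax_comp_swap_of_le {r : ℕ} (hr : r ≤ m) (w : ℕ → ℕ) :
    intervalMax r (w ∘ Equiv.swap m (m + 1)) = intervalMax r w :=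
  intervalMax_congr_of_eqOn fun j hj => by
    simp only [comp_apply, Equiv.swap_apply_of_ne_of_ne (show j ≠ m by omega)
      (show j ≠ m + 1 by omega)]

theorem dInvariant_comp_swap (w : ℕ → ℕ) :
    dInvariant m (w ∘ Equiv.swap m (m + 1)) = (dInvariant m w).swap := by
  have hsw : w ∘ Equiv.swap m (m + 1) ∘ Equiv.swap m (m + 1) = w :=
    funext fun j => congrArg w (Equiv.swap_apply_self _ _ j)
  simp only [dInvariant, Prod.swap_prod_mk, comp_assoc, hsw]

theorem dInvariant_two_mul_add (w : ℕ → ℕ) (c : ℕ) :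
    dInvariant m (fun j => 2 * w j + c) = dInvariant m w :=
  Prod.ext (intervalMax_two_mul_add _ w c) (intervalMax_two_mul_add _ (w ∘ Equiv.swap m (m + 1)) c)

theorem fst_mem_intervalMaxRels {P} (hP : P ∈ dInvariants m) : P.1 ∈ intervalMaxRels (m + 1) := by
  obtain ⟨w, hw, rfl⟩ := hP
  exact intervalMax_mem_intervalMaxRels_of_le hw (by omega)

theorem swap_mem_dInvariants {P} (hP : P ∈ dInvariants m) : P.swap ∈ dInvariants m := by
  obtain ⟨w, hw, rfl⟩ := hP
  exact ⟨_, injOn_comp_swap hw, dInvariant_comp_swap w⟩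

theorem snd_mem_intervalMaxRels {P} (hP : P ∈ dInvariants m) : P.2 ∈ intervalMaxRels (m + 1) :=
  fst_mem_intervalMaxRels (swap_mem_dInvariants hP)

theorem fst_splitAt_snd_eq {r s : ℕ} (hk : r + 1 + s = m + 1) {P} (hP : P ∈ dInvariants m) :
    (splitAt r s hk P.2).1 = (splitAt r s hk P.1).1 := by
  obtain ⟨w, -, rfl⟩ := hP
  simp only [dInvariant, splitAt_intervalMax, intervalMax_comp_swap_of_le (show r ≤ m by omega)]

theorem injOn_snd_isPeak_last :
    InjOn Prod.snd {P ∈ dInvariants m | IsPeak P.1 (Fin.last m)} := by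
  rintro P ⟨hP, hA⟩ P' ⟨hP', hA'⟩ h
  have hk : m + 1 + 0 = m + 1 := rfl
  refine Prod.ext (eq_of_isPeak_of_splitAt_eq hk (fst_mem_intervalMaxRels hP)
    (fst_mem_intervalMaxRels hP') hA hA' (Prod.ext ?_ (Subsingleton.elim _ _))) h
  rw [← fst_splitAt_snd_eq hk hP, ← fst_splitAt_snd_eq hk hP', h]

def raiseFirstTop (m : ℕ) (v : ℕ → ℕ) : ℕ → ℕ :=
  update (v ∘ Equiv.swap m (m + 1)) m ((Finset.range (m + 1)).sup v + 1)

theorem swap_lt_of_ne {j : ℕ} (hj : j < m + 2) (hjm : j ≠ m) : Equiv.swap m (m + 1) j < m + 1 := by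
  rw [Equiv.swap_apply_def]
  split_ifs <;> omega

theorem raiseFirstTop_of_ne {v : ℕ → ℕ} {j : ℕ} (hj : j ≠ m) :
    raiseFirstTop m v j = v (Equiv.swap m (m + 1) j) :=
  update_of_ne hj _ _

theorem raiseFirstTop_lt_top {v : ℕ → ℕ} {j : ℕ} (hj : j < m + 2) (hjm : j ≠ m) :
    raiseFirstTop m v j < raiseFirstTop m v m := by
  rw [raiseFirstTop_of_ne hjm, raiseFirstTop, update_self, Nat.lt_add_one_iff]
  exact Finset.le_sup (Finset.mem_range.mpr (swap_lt_of_ne hj hjm))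

theorem injOn_raiseFirstTop {v : ℕ → ℕ} (hv : InjOn v (Iio (m + 1))) :
    InjOn (raiseFirstTop m v) (Iio (m + 2)) := by
  intro a (ha : a < m + 2) b (hb : b < m + 2) hab
  by_cases ham : a = m
  · by_contra hne
    exact (raiseFirstTop_lt_top hb (by omega)).ne (ham ▸ hab).symm
  by_cases hbm : b = m
  · exact absurd (hbm ▸ hab) (raiseFirstTop_lt_top ha ham).ne
  rw [raiseFirstTop_of_ne ham, raiseFirstTop_of_ne hbm] at hab
  exact (Equiv.injective _) (hv (swap_lt_of_ne ha ham) (swap_lt_of_ne hb hbm) hab)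

theorem dInvariant_raiseFirstTop {v : ℕ → ℕ} :
    IsPeak (dInvariant m (raiseFirstTop m v)).1 (Fin.last m) ∧
      (dInvariant m (raiseFirstTop m v)).2 = intervalMax (m + 1) v := by
  refine ⟨isPeak_intervalMax_iff.mpr fun j hj => ?_, intervalMax_congr_of_eqOn fun j hj => ?_⟩
  · rcases eq_or_ne j m with rfl | hjm
    · exact le_rfl
    · exact (raiseFirstTop_lt_top (by omega) hjm).le
  · have : Equiv.swap m (m + 1) j ≠ m := by
      rw [Equiv.swap_apply_def]
      split_ifs <;> omega
    rw [comp_apply, raiseFirstTop_of_ne this, Equiv.swap_apply_self]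

theorem image_snd_isPeak_last :
    Prod.snd '' {P ∈ dInvariants m | IsPeak P.1 (Fin.last m)} = intervalMaxRels (m + 1) := by
  refine Subset.antisymm (image_subset_iff.mpr fun P hP => snd_mem_intervalMaxRels hP.1) ?_
  rintro _ ⟨v, hv, rfl⟩
  exact ⟨_, ⟨⟨_, injOn_raiseFirstTop hv, rfl⟩, dInvariant_raiseFirstTop.1⟩,
    dInvariant_raiseFirstTop.2⟩

theorem ncard_dInvariants_fst_isPeak_last :
    {P ∈ dInvariants m | IsPeak P.1 (Fin.last m)}.ncard = catalan (m + 1) := by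
  rw [← injOn_snd_isPeak_last.ncard_image, image_snd_isPeak_last, ncard_intervalMaxRels]

theorem ncard_dInvariants_snd_isPeak_last :
    {P ∈ dInvariants m | IsPeak P.2 (Fin.last m)}.ncard = catalan (m + 1) := by
  rw [← ncard_dInvariants_fst_isPeak_last, ← Prod.swap_injective.injOn.ncard_image]
  congr 1
  ext P
  refine ⟨?_, fun hP => ⟨P.swap, ⟨swap_mem_dInvariants hP.1, hP.2⟩, P.swap_swap⟩⟩
  rintro ⟨P, ⟨hP, hB⟩, rfl⟩
  exact ⟨swap_mem_dInvariants hP, hB⟩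

theorem ncard_dInvariants_isPeak_last_and :
    {P ∈ dInvariants m | IsPeak P.1 (Fin.last m) ∧ IsPeak P.2 (Fin.last m)}.ncard = catalan m := by
  have hset : {P ∈ dInvariants m | IsPeak P.1 (Fin.last m) ∧ IsPeak P.2 (Fin.last m)} =
      {P ∈ dInvariants m | IsPeak P.1 (Fin.last m)} ∩ Prod.snd ⁻¹' {R | IsPeak R (Fin.last m)} := by
    ext P
    exact and_assoc.symm
  have hk : m + 1 + 0 = m + 1 := rfl
  have := ncard_intervalMaxRels_isPeak hk
  rw [ncard_intervalMaxRels, ncard_intervalMaxRels, catalan_zero, mul_one] at this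
  rw [hset, ← (injOn_snd_isPeak_last.mono inter_subset_left).ncard_image, image_inter_preimage,
    image_snd_isPeak_last, ← this]
  rfl

theorem isPeak_dInvariant_of_forall_le {w : ℕ → ℕ} {r : ℕ} (hr : r < m)
    (hmax : ∀ j < m + 2, w j ≤ w r) :
    IsPeak (dInvariant m w).1 ⟨r, by omega⟩ ∧ IsPeak (dInvariant m w).2 ⟨r, by omega⟩ := by
  refine ⟨isPeak_intervalMax_iff.mpr fun j hj => hmax j (by omega),
    isPeak_intervalMax_iff.mpr fun j hj => ?_⟩
  rw [comp_apply, comp_apply, Equiv.swap_apply_of_ne_of_ne (show r ≠ m by omega)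
    (show r ≠ m + 1 by omega)]
  exact hmax _ (swap_lt_of_lt (by omega))

def dSplit (r s : ℕ) (hk : r + 1 + (s + 1) = m + 1)
    (P : (Fin (m + 1) → Fin (m + 1) → Prop) × (Fin (m + 1) → Fin (m + 1) → Prop)) :
    (Fin r → Fin r → Prop) × (Fin (s + 1) → Fin (s + 1) → Prop) × (Fin (s + 1) → Fin (s + 1) → Prop) :=
  ((splitAt r (s + 1) hk P.1).1, (splitAt r (s + 1) hk P.1).2, (splitAt r (s + 1) hk P.2).2)

theorem dSplit_dInvariant {r s : ℕ} (hk : r + 1 + (s + 1) = m + 1) (w : ℕ → ℕ) :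
    dSplit r s hk (dInvariant m w) = (intervalMax r w, dInvariant s fun j => w (r + 1 + j)) := by
  obtain rfl : m = r + 1 + s := by omega
  simp only [dSplit, dInvariant, splitAt_intervalMax]
  congr 3
  funext j
  exact congrArg w ((add_right_injective (r + 1)).swap_apply s (s + 1) j)

theorem injOn_dSplit {r s : ℕ} (hk : r + 1 + (s + 1) = m + 1) :
    InjOn (dSplit r s hk)
      {P ∈ dInvariants m | IsPeak P.1 ⟨r, by omega⟩ ∧ IsPeak P.2 ⟨r, by omega⟩} := by
  rintro P ⟨hP, h₁, h₂⟩ P' ⟨hP', h₁', h₂'⟩ h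
  simp only [dSplit, Prod.mk.injEq] at h
  obtain ⟨hl, hr₁, hr₂⟩ := h
  have hfst : P.1 = P'.1 := eq_of_isPeak_of_splitAt_eq hk (fst_mem_intervalMaxRels hP)
    (fst_mem_intervalMaxRels hP') h₁ h₁' (Prod.ext hl hr₁)
  refine Prod.ext hfst (eq_of_isPeak_of_splitAt_eq hk (snd_mem_intervalMaxRels hP)
    (snd_mem_intervalMaxRels hP') h₂ h₂' (Prod.ext ?_ hr₂))
  rw [fst_splitAt_snd_eq hk hP, fst_splitAt_snd_eq hk hP', hfst]

theorem image_dSplit {r s : ℕ} (hk : r + 1 + (s + 1) = m + 1) :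
    dSplit r s hk '' {P ∈ dInvariants m | IsPeak P.1 ⟨r, by omega⟩ ∧ IsPeak P.2 ⟨r, by omega⟩} =
      intervalMaxRels r ×ˢ dInvariants s := by
  have hm : m + 2 = r + 1 + (s + 2) := by omega
  ext ⟨L, Q⟩
  constructor
  · rintro ⟨_, ⟨⟨w, hw, rfl⟩, -⟩, hLQ⟩
    rw [dSplit_dInvariant, Prod.mk.injEq] at hLQ
    obtain ⟨rfl, rfl⟩ := hLQ
    rw [hm] at hw
    exact ⟨intervalMax_mem_intervalMaxRels_of_le hw (by omega), _, injOn_shift hw, rfl⟩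
  · rintro ⟨⟨u, hu, rfl⟩, ⟨v, hv, rfl⟩⟩
    refine ⟨dInvariant m (peakJoin r (s + 2) u v),
      ⟨⟨_, hm ▸ injOn_peakJoin hu hv, rfl⟩, isPeak_dInvariant_of_forall_le (by omega) ?_⟩, ?_⟩
    · intro j hj
      rcases eq_or_ne j r with rfl | hne
      · exact le_rfl
      · exact (peakJoin_lt_peak (by omega) hne).le
    · simp only [dSplit_dInvariant, intervalMax_peakJoin_left, peakJoin_add, dInvariant_two_mul_add]

theorem ncard_dInvariants_isPeak {r s : ℕ} (hk : r + 1 + (s + 1) = m + 1) :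
    {P ∈ dInvariants m | IsPeak P.1 ⟨r, by omega⟩ ∧ IsPeak P.2 ⟨r, by omega⟩}.ncard =
      catalan r * (dInvariants s).ncard := by
  rw [← ncard_intervalMaxRels, ← ncard_prod, ← image_dSplit hk, (injOn_dSplit hk).ncard_image]

theorem existsUnique_peakPosition {P} (hP : P ∈ dInvariants m) :
    ∃! i : Option (Fin m), i.elim (IsPeak P.1 (Fin.last m) ∨ IsPeak P.2 (Fin.last m))
      fun r => IsPeak P.1 r.castSucc ∧ IsPeak P.2 r.castSucc := by
  refine existsUnique_of_exists_of_unique ?_ ?_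
  · by_cases hAB : IsPeak P.1 (Fin.last m) ∨ IsPeak P.2 (Fin.last m)
    · exact ⟨none, hAB⟩
    push Not at hAB
    obtain ⟨w, -, rfl⟩ := hP
    obtain ⟨g, hg, hmax⟩ := exists_forall_le_of_pos (by omega : 0 < m + 2) w
    have hgm : g ≠ m := by
      rintro rfl
      exact hAB.1 (isPeak_intervalMax_iff.mpr fun j hj => hmax j (by omega))
    have hgm' : g ≠ m + 1 := by
      rintro rfl
      refine hAB.2 (isPeak_intervalMax_iff.mpr fun j hj => ?_)
      simpa [Equiv.swap_apply_left] using hmax _ (swap_lt_of_lt (by omega : j < m + 2))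
    exact ⟨some ⟨g, by omega⟩, isPeak_dInvariant_of_forall_le (by omega) hmax⟩
  · have hP₁ := fst_mem_intervalMaxRels hP
    rintro (_ | r) (_ | r') h h'
    · rfl
    · exact absurd (h.elim (h'.1.eq hP₁) (h'.2.eq (snd_mem_intervalMaxRels hP)))
        (Fin.castSucc_lt_last r').ne
    · exact absurd (h'.elim (h.1.eq hP₁) (h.2.eq (snd_mem_intervalMaxRels hP)))
        (Fin.castSucc_lt_last r).ne
    · exact congrArg some (Fin.castSucc_injective _ (h.1.eq hP₁ h'.1))

theorem ncard_dInvariants_eq_add_sum :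
    (dInvariants m).ncard = {P ∈ dInvariants m | IsPeak P.1 (Fin.last m) ∨
      IsPeak P.2 (Fin.last m)}.ncard + ∑ r : Fin m, catalan r * (dInvariants (m - 1 - r)).ncard := by
  rw [ncard_eq_sum_ncard_sep (toFinite _) _ fun P hP => existsUnique_peakPosition hP,
    Fintype.sum_option]
  congr 1
  exact Finset.sum_congr rfl fun r _ =>
    ncard_dInvariants_isPeak (show (r : ℕ) + 1 + (m - 1 - r + 1) = m + 1 by omega)

theorem ncard_dInvariants_isPeak_last_or :
    {P ∈ dInvariants m | IsPeak P.1 (Fin.last m) ∨ IsPeak P.2 (Fin.last m)}.ncard + catalan m =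
      2 * catalan (m + 1) := by
  rw [← ncard_dInvariants_isPeak_last_and, sep_or, sep_and, ncard_union_add_ncard_inter,
    ncard_dInvariants_fst_isPeak_last, ncard_dInvariants_snd_isPeak_last, two_mul]

theorem ncard_dInvariants_add (m : ℕ) :
    (dInvariants m).ncard + 3 * catalan (m + 1) = 2 * catalan (m + 2) := by
  induction m using Nat.strong_induction_on with
  | _ m ih =>
  have hterm (r : Fin m) : catalan r * (dInvariants (m - 1 - r)).ncard +
      3 * (catalan r * catalan (m - r)) = 2 * (catalan r * catalan (m + 1 - r)) := by
    have h := ih (m - 1 - r) (by omega)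
    rw [show catalan (m - 1 - r + 1) = catalan (m - r) from congrArg catalan (by omega),
      show catalan (m - 1 - r + 2) = catalan (m + 1 - r) from congrArg catalan (by omega)] at h
    calc _ = catalan r * ((dInvariants (m - 1 - r)).ncard + 3 * catalan (m - r)) := by ring
      _ = _ := by rw [h]; ring
  have hsum := Finset.sum_congr rfl fun r (_ : r ∈ Finset.univ) => hterm r
  rw [Finset.sum_add_distrib, ← Finset.mul_sum, ← Finset.mul_sum] at hsum
  have h₁ := catalan_succ_eq_sum_add m
  have h₂ : catalan (m + 2) =
      ∑ r : Fin m, catalan r * catalan (m + 1 - r) + catalan m + catalan (m + 1) := by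
    rw [catalan_succ_eq_sum_add (m + 1), Fin.sum_univ_castSucc]
    simp
  have := ncard_dInvariants_isPeak_last_or (m := m)
  rw [ncard_dInvariants_eq_add_sum]
  omega

end DInvariant

section QuasiHereditary

variable {V : Type*} {le : V → V → Prop}

theorem qhEquivG_equivalence (le : V → V → Prop) : Equivalence (QHEquivG le) where
  refl _ := ⟨fun _ _ => Iff.rfl, fun _ _ => Iff.rfl⟩
  symm h := ⟨fun x y => (h.1 x y).symm, fun x y => (h.2 x y).symm⟩
  trans h h' := ⟨fun x y => (h.1 x y).trans (h'.1 x y), fun x y => (h.2 x y).trans (h'.2 x y)⟩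

theorem adaptedG_of_total {l : V → V → Prop} (h : ∀ a b, l a b ∨ l b a) : AdaptedG le l :=
  fun i j _ hij hji => ((h i j).elim hij hji).elim

/-- If `k` lies in an interval with `s k y` but not `l k y`, adaptedness gives a `j` in that
interval with `l y j` and `l k j`, and then `s j y` forces `j = y`. -/
theorem qhEquivG_of_le {l s : V → V → Prop} (htrans : ∀ a b c, le a b → le b c → le a c)
    (hrefl : ∀ a, l a a) (had : AdaptedG le l) (hanti : ∀ a b, s a b → s b a → a = b)
    (hls : ∀ a b, l a b → s a b) : QHEquivG le l s := by
  have incomparable : ∀ k y, s k y → ¬ l k y → ¬ l y k := fun k y hky hnk hyk =>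
    hnk (hanti k y hky (hls y k hyk) ▸ hrefl k)
  refine ⟨fun x y => ⟨fun h => ⟨h.1, fun k h₁ h₂ => hls _ _ (h.2 k h₁ h₂)⟩, fun h => ⟨h.1, ?_⟩⟩,
    fun x y => ⟨fun h => ⟨h.1, fun k h₁ h₂ => hls _ _ (h.2 k h₁ h₂)⟩, fun h => ⟨h.1, ?_⟩⟩⟩
  · intro k hyk hkx
    by_contra hnk
    obtain ⟨j, hyj, hjk, hlyj, hlkj⟩ := had y k hyk (incomparable k y (h.2 k hyk hkx) hnk) hnk
    obtain rfl := hanti j y (h.2 j hyj (htrans j k x hjk hkx)) (hls y j hlyj)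
    exact hnk hlkj
  · intro k hxk hky
    by_contra hnk
    obtain ⟨j, hkj, hjy, hlkj, hlyj⟩ := had k y hky hnk (incomparable k y (h.2 k hxk hky) hnk)
    obtain rfl := hanti j y (h.2 j (htrans x k j hxk hkj) hjy) (hls y j hlyj)
    exact hnk hlkj

def IsConvexChain {α : Type*} [LinearOrder α] (le : V → V → Prop) (ι : α → V) : Prop :=
  (∀ x y, le (ι x) (ι y) ↔ x ≤ y) ∧ ∀ x y k, le (ι x) k → le k (ι y) → k ∈ range ι

section IsConvexChain

variable {α : Type*} [LinearOrder α] {ι : α → V}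

theorem IsConvexChain.forall_interval_iff (hι : IsConvexChain le ι) {x y : α} {p : V → Prop} :
    (∀ k, le (ι x) k → le k (ι y) → p k) ↔ ∀ j, x ≤ j → j ≤ y → p (ι j) := by
  refine ⟨fun h j hxj hjy => h _ ((hι.1 _ _).2 hxj) ((hι.1 _ _).2 hjy), fun h k hxk hky => ?_⟩
  obtain ⟨j, rfl⟩ := hι.2 x y k hxk hky
  exact h j ((hι.1 _ _).1 hxk) ((hι.1 _ _).1 hky)

theorem IsConvexChain.incRelG_iff (hι : IsConvexChain le ι) (l : V → V → Prop) (x y : α) :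
    IncRelG le l (ι x) (ι y) ↔ x ≤ y ∧ ∀ j, x ≤ j → j ≤ y → l (ι j) (ι y) := by
  rw [IncRelG, hι.1]
  exact and_congr_right fun _ => hι.forall_interval_iff

theorem IsConvexChain.decRelG_iff (hι : IsConvexChain le ι) (l : V → V → Prop) (x y : α) :
    DecRelG le l (ι x) (ι y) ↔ y ≤ x ∧ ∀ j, y ≤ j → j ≤ x → l (ι j) (ι y) := by
  rw [DecRelG, hι.1]
  exact and_congr_right fun _ => hι.forall_interval_iff

end IsConvexChain

section

variable {k : ℕ} {ι : Fin k → V} {W : V → ℕ} {v : ℕ → ℕ}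

theorem IsConvexChain.incRelG_onFun_iff (hι : IsConvexChain le ι)
    (hv : ∀ j : Fin k, v j = W (ι j)) (x y : Fin k) :
    IncRelG le ((· ≤ ·) on W) (ι x) (ι y) ↔ x ≤ y ∧ intervalMax k v x y := by
  rw [hι.incRelG_iff, intervalMax_iff_forall_fin]
  refine and_congr_right fun hxy => forall_congr' fun j => ?_
  rw [Fin.le_def] at hxy
  simp only [onFun, ← hv, Fin.le_def]
  exact ⟨fun h h₁ h₂ => h (by omega) (by omega), fun h h₁ h₂ => h (by omega) (by omega)⟩

theorem IsConvexChain.decRelG_onFun_iff (hι : IsConvexChain le ι)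
    (hv : ∀ j : Fin k, v j = W (ι j)) (x y : Fin k) :
    DecRelG le ((· ≤ ·) on W) (ι x) (ι y) ↔ y ≤ x ∧ intervalMax k v x y := by
  rw [hι.decRelG_iff, intervalMax_iff_forall_fin]
  refine and_congr_right fun hyx => forall_congr' fun j => ?_
  rw [Fin.le_def] at hyx
  simp only [onFun, ← hv, Fin.le_def]
  exact ⟨fun h h₁ h₂ => h (by omega) (by omega), fun h h₁ h₂ => h (by omega) (by omega)⟩

theorem IsConvexChain.intervalMax_iff (hι : IsConvexChain le ι)
    (hv : ∀ j : Fin k, v j = W (ι j)) (x y : Fin k) :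
    intervalMax k v x y ↔
      IncRelG le ((· ≤ ·) on W) (ι x) (ι y) ∨ DecRelG le ((· ≤ ·) on W) (ι x) (ι y) := by
  rw [hι.incRelG_onFun_iff hv, hι.decRelG_onFun_iff hv]
  rcases le_total x y with h | h <;> simp [h]

end

end QuasiHereditary

section Words

abbrev wordLE {n : ℕ} (w : ℕ → ℕ) : Fin n → Fin n → Prop :=
  (· ≤ ·) on fun a => w a

theorem exists_injOn_wordLE_eq {n : ℕ} {s : Fin n → Fin n → Prop} (hs : IsLinearOrder (Fin n) s) :
    ∃ w : ℕ → ℕ, InjOn w (Iio n) ∧ wordLE w = s := by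
  classical
  let rank (a : Fin n) := (Finset.univ.filter fun z => s z a).card
  have hrank : ∀ a b, s a b ↔ rank a ≤ rank b := by
    refine fun a b => ⟨fun hab => Finset.card_le_card fun z hz => ?_, fun h => ?_⟩
    · simp only [Finset.mem_filter, Finset.mem_univ, true_and] at hz ⊢
      exact _root_.trans hz hab
    · by_contra hab
      have hba : s b a := (total_of s a b).resolve_left hab
      refine h.not_gt (Finset.card_lt_card ((Finset.ssubset_iff_of_subset fun z hz => ?_).mpr
        ⟨a, by simp [refl_of s a], by simpa using hab⟩))
      simp only [Finset.mem_filter, Finset.mem_univ, true_and] at hz ⊢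
      exact _root_.trans hz hba
  refine ⟨fun j => if h : j < n then rank ⟨j, h⟩ else 0, fun a (ha : a < n) b (hb : b < n) h => ?_,
    funext₂ fun a b => propext ?_⟩
  · simp only [ha, hb, dif_pos] at h
    exact congrArg Fin.val (antisymm ((hrank _ _).mpr h.le) ((hrank _ _).mpr h.ge))
  · change (if h : (a : ℕ) < n then rank ⟨a, h⟩ else 0) ≤
      (if h : (b : ℕ) < n then rank ⟨b, h⟩ else 0) ↔ s a b
    rw [dif_pos a.2, dif_pos b.2, hrank]

theorem isPartialOrder_wordLE {n : ℕ} {w : ℕ → ℕ} (hw : InjOn w (Iio n)) :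
    IsPartialOrder (Fin n) (wordLE w) where
  refl _ := le_rfl
  trans _ _ _ := le_trans
  antisymm a b hab hba := Fin.ext (hw a.2 b.2 (le_antisymm hab hba))

theorem exists_qhEquivG_wordLE {n : ℕ} {le : Fin n → Fin n → Prop}
    (htrans : ∀ a b c, le a b → le b c → le a c) {l : Fin n → Fin n → Prop}
    (hl : IsPartialOrder (Fin n) l) (had : AdaptedG le l) :
    ∃ w : ℕ → ℕ, InjOn w (Iio n) ∧ QHEquivG le l (wordLE w) := by
  obtain ⟨s, hs, hls⟩ := extend_partialOrder l
  obtain ⟨w, hw, rfl⟩ := exists_injOn_wordLE_eq hs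
  exact ⟨w, hw, qhEquivG_of_le htrans (refl_of l) had (fun a b => antisymm_of (wordLE w)) hls⟩

end Words

section D1

variable {m : ℕ}

def chainA (m : ℕ) (x : Fin (m + 1)) : Fin (m + 2) :=
  x.castSucc

/-- The maximal chain through `m + 1`: `swap m (m + 1)` moves the top of `0, …, m` to `m + 1`. -/
def chainB (m : ℕ) (x : Fin (m + 1)) : Fin (m + 2) :=
  ⟨Equiv.swap m (m + 1) x, swap_lt_of_lt (by omega)⟩

theorem D1le_trans {n : ℕ} (a b c : Fin n) (hab : D1le n a b) (hbc : D1le n b c) :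
    D1le n a c := by
  simp only [D1le, Fin.ext_iff] at *
  omega

theorem isConvexChain_chainA : IsConvexChain (D1le (m + 2)) (chainA m) := by
  refine ⟨fun x y => ?_, fun x y k hxk hky => ⟨⟨k, ?_⟩, rfl⟩⟩
  · simp only [D1le, chainA, Fin.ext_iff, Fin.le_def, Fin.val_castSucc]
    omega
  · simp only [D1le, chainA, Fin.ext_iff, Fin.val_castSucc] at hky
    omega

theorem isConvexChain_chainB : IsConvexChain (D1le (m + 2)) (chainB m) := by
  refine ⟨fun x y => ?_, fun x y k hxk hky => ?_⟩
  · simp only [D1le, chainB, Fin.ext_iff, Fin.le_def, Equiv.swap_apply_def]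
    split_ifs <;> omega
  · simp only [D1le, chainB, Fin.ext_iff, Equiv.swap_apply_def] at hxk hky
    refine ⟨⟨Equiv.swap m (m + 1) k, ?_⟩, Fin.ext (Equiv.swap_apply_self _ _ _)⟩
    rw [Equiv.swap_apply_def]
    split_ifs at hxk hky ⊢ <;> omega

theorem D1le_exists_chain {a b : Fin (m + 2)} (h : D1le (m + 2) a b) : ∃ x y : Fin (m + 1),
    (chainA m x = a ∧ chainA m y = b) ∨ (chainB m x = a ∧ chainB m y = b) := by
  simp only [D1le, Fin.ext_iff] at h
  by_cases htop : (b : ℕ) = m + 1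
  · refine ⟨⟨Equiv.swap m (m + 1) a, ?_⟩, ⟨m, by omega⟩, .inr ⟨?_, ?_⟩⟩
    · rw [Equiv.swap_apply_def]
      split_ifs <;> omega
    · exact Fin.ext (Equiv.swap_apply_self _ _ _)
    · exact Fin.ext (by simp [chainB, htop])
  · exact ⟨⟨a, by omega⟩, ⟨b, by omega⟩, .inl ⟨rfl, rfl⟩⟩

theorem qhEquivG_wordLE_iff {w w' : ℕ → ℕ} :
    QHEquivG (D1le (m + 2)) (wordLE w) (wordLE w') ↔ dInvariant m w = dInvariant m w' := by
  have hA := isConvexChain_chainA (m := m)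
  have hB := isConvexChain_chainB (m := m)
  constructor
  · intro h
    refine Prod.ext (funext₂ fun x y => propext ?_) (funext₂ fun x y => propext ?_)
    · change intervalMax _ w x y ↔ intervalMax _ w' x y
      rw [hA.intervalMax_iff (W := fun a : Fin (m + 2) => w a) (fun _ => rfl),
        hA.intervalMax_iff (W := fun a : Fin (m + 2) => w' a) (fun _ => rfl), h.1, h.2]
    · change intervalMax _ (w ∘ Equiv.swap m (m + 1)) x y ↔
        intervalMax _ (w' ∘ Equiv.swap m (m + 1)) x y
      rw [hB.intervalMax_iff (W := fun a : Fin (m + 2) => w a) (fun _ => rfl),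
        hB.intervalMax_iff (W := fun a : Fin (m + 2) => w' a) (fun _ => rfl), h.1, h.2]
  · intro h
    have hchain : ∀ a b, D1le (m + 2) a b → ∃ ι : Fin (m + 1) → Fin (m + 2), ∃ v v' : ℕ → ℕ,
        IsConvexChain (D1le (m + 2)) ι ∧ (∀ j : Fin (m + 1), v j = w (ι j)) ∧
          (∀ j : Fin (m + 1), v' j = w' (ι j)) ∧
          intervalMax (m + 1) v = intervalMax (m + 1) v' ∧ ∃ x y, ι x = a ∧ ι y = b := by
      intro a b hab
      obtain ⟨x, y, ⟨rfl, rfl⟩ | ⟨rfl, rfl⟩⟩ := D1le_exists_chain hab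
      · exact ⟨_, w, w', hA, fun _ => rfl, fun _ => rfl, congrArg Prod.fst h, x, y, rfl, rfl⟩
      · exact ⟨_, _, _, hB, fun _ => rfl, fun _ => rfl, congrArg Prod.snd h, x, y, rfl, rfl⟩
    refine ⟨fun a b => ?_, fun a b => ?_⟩
    · by_cases hba : D1le (m + 2) b a
      · obtain ⟨ι, v, v', hι, hv, hv', hvv', y, x, rfl, rfl⟩ := hchain b a hba
        rw [hι.decRelG_onFun_iff hv, hι.decRelG_onFun_iff hv', hvv']
      · exact iff_of_false (fun h => hba h.1) (fun h => hba h.1)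
    · by_cases hab : D1le (m + 2) a b
      · obtain ⟨ι, v, v', hι, hv, hv', hvv', x, y, rfl, rfl⟩ := hchain a b hab
        rw [hι.incRelG_onFun_iff hv, hι.incRelG_onFun_iff hv', hvv']
      · exact iff_of_false (fun h => hab h.1) (fun h => hab h.1)

end D1

/-- `|qh.str(kD₁)| = 2·Cₙ − 3·C_{n-1}` for `n ≥ 3`. -/
theorem card_qhStr_D1 (n : ℕ) (hn : 3 ≤ n) :
    Nat.card (Quot (fun (l₁ l₂ : {l : Fin n → Fin n → Prop //
        IsPartialOrder (Fin n) l ∧ AdaptedG (D1le n) l}) =>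
      QHEquivG (D1le n) l₁.1 l₂.1)) + 3 * catalan (n - 1) = 2 * catalan n := by
  obtain ⟨m, rfl⟩ : ∃ m, n = m + 2 := ⟨n - 2, by omega⟩
  let ρ (w : {w : ℕ → ℕ // InjOn w (Iio (m + 2))}) : {l : Fin (m + 2) → Fin (m + 2) → Prop //
      IsPartialOrder (Fin (m + 2)) l ∧ AdaptedG (D1le (m + 2)) l} :=
    ⟨wordLE w.1, isPartialOrder_wordLE w.2, adaptedG_of_total fun a b => le_total _ _⟩
  have hrange : range (fun w : {w : ℕ → ℕ // InjOn w (Iio (m + 2))} => dInvariant m w.1) =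
      dInvariants m := by
    ext P
    exact ⟨fun ⟨w, hw⟩ => ⟨w.1, w.2, hw⟩, fun ⟨w, hw, hP⟩ => ⟨⟨w, hw⟩, hP⟩⟩
  rw [card_quot_eq_ncard_range ((qhEquivG_equivalence _).comap Subtype.val) ρ _ ?_
    fun _ _ => qhEquivG_wordLE_iff, hrange, show m + 2 - 1 = m + 1 by omega]
  · exact ncard_dInvariants_add m
  · rintro ⟨l, hl, had⟩
    obtain ⟨w, hw, h⟩ := exists_qhEquivG_wordLE D1le_trans hl had
    exact ⟨⟨w, hw⟩, h⟩
end
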